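/- arXiv:1812.00617 — 5 statements merged into one kernel-verified Lean document; each statement's English description precedes it below -/
import Mathlib

section
/- In the alternating group graph AG_n (n ≥ 4), any two nonadjacent vertices have at most 2 common neighbors. -/
/-- The 3-rotation `g_i^+` (rotate symbols at positions 1,2,i from left to right,
in 0-based indexing positions 0,1,i): swap positions 1,i then swap positions 0,1. -/
def gPlus (n : ℕ) [NeZero n] (i : Fin n) : Equiv.Perm (Fin n) :=
  Equiv.swap 1 i * Equiv.swap 0 1

/-- The 3-rotation `g_i^-` (rotate symbols at positions 1,2,i from right to left). -/
def gMinus (n : ℕ) [NeZero n] (i : Fin n) : Equiv.Perm (Fin n) :=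
  Equiv.swap 0 i * Equiv.swap 0 1

/-- The generating relation of the alternating group graph: `q` is obtained from `p`
by a 3-rotation `g_i^±` with `3 ≤ i ≤ n` (0-based: `2 ≤ i.val`). -/
def agRel (n : ℕ) [NeZero n] (p q : Equiv.Perm (Fin n)) : Prop :=
  ∃ i : Fin n, 2 ≤ i.val ∧ (q = p * gPlus n i ∨ q = p * gMinus n i)

/-- The alternating group graph `AG_n`, a Cayley graph on the even permutations. -/
def AG (n : ℕ) [NeZero n] :
    SimpleGraph {p : Equiv.Perm (Fin n) // Equiv.Perm.sign p = 1} :=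
  SimpleGraph.fromRel (fun p q => agRel n p.1 q.1)

/-- The split-star graph `S_n^2`, a Cayley graph on all permutations, with the
2-exchange `g_{12}` together with the 3-rotations as generators. -/
def SplitStar (n : ℕ) [NeZero n] : SimpleGraph (Equiv.Perm (Fin n)) :=
  SimpleGraph.fromRel (fun p q => q = p * Equiv.swap 0 1 ∨ agRel n p q)

/-- The (external) neighborhood of a vertex set. -/
def nbhd {V : Type*} (G : SimpleGraph V) (S : Set V) : Set V :=
  {v | v ∉ S ∧ ∃ u ∈ S, G.Adj u v}

/-- An independent set: pairwise nonadjacent vertices. -/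
def IsIndep {V : Type*} (G : SimpleGraph V) (S : Set V) : Prop :=
  ∀ u ∈ S, ∀ v ∈ S, ¬ G.Adj u v

/-- The `ℓ`-component connectivity: the minimum size of a vertex set `F` whose
removal results in a graph with at least `ℓ` components or fewer than `ℓ` vertices. -/
noncomputable def compConn {V : Type*} (G : SimpleGraph V) (l : ℕ) : ℕ :=
  sInf {k | ∃ F : Set V, F.ncard = k ∧
    (l ≤ Nat.card (G.induce Fᶜ).ConnectedComponent ∨ (Fᶜ : Set V).ncard < l)}

namespace AGaux

variable {n : ℕ} [NeZero n]

/-- membership in the generating set -/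
def isGen (n : ℕ) [NeZero n] (g : Equiv.Perm (Fin n)) : Prop :=
  ∃ i : Fin n, 2 ≤ i.val ∧ (g = gPlus n i ∨ g = gMinus n i)

section eval

variable (hn : 4 ≤ n)

lemma one_val (hn : 4 ≤ n) : (1 : Fin n).val = 1 := by
  rw [Fin.val_one']; exact Nat.mod_eq_of_lt (by omega)

lemma zero_ne_one (hn : 4 ≤ n) : (0 : Fin n) ≠ 1 := by
  intro h
  have h1 := one_val hn
  have h0 : (1 : Fin n).val = 0 := by rw [← h]; rfl
  omega

lemma ne01 (hn : 4 ≤ n) {i : Fin n} (hi : 2 ≤ i.val) : i ≠ 0 ∧ i ≠ 1 := by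
  have h1 := one_val hn
  constructor <;> intro h <;> rw [h] at hi
  · simp at hi
  · omega

variable {i : Fin n}

lemma gP0 : gPlus n i 0 = i := by
  simp [gPlus, Equiv.Perm.mul_apply]

lemma gP1 (hi0 : i ≠ 0) (h01 : (0 : Fin n) ≠ 1) : gPlus n i 1 = 0 := by
  simp [gPlus, Equiv.Perm.mul_apply,
    Equiv.swap_apply_of_ne_of_ne h01 (Ne.symm hi0)]

lemma gPi (hi0 : i ≠ 0) (hi1 : i ≠ 1) : gPlus n i i = 1 := by
  simp [gPlus, Equiv.Perm.mul_apply,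
    Equiv.swap_apply_of_ne_of_ne hi0 hi1]

lemma gPx (hi0 : i ≠ 0) (hi1 : i ≠ 1) (h01 : (0 : Fin n) ≠ 1) {x : Fin n} (hx0 : x ≠ 0) (hx1 : x ≠ 1) (hxi : x ≠ i) :
    gPlus n i x = x := by
  simp [gPlus, Equiv.Perm.mul_apply,
    Equiv.swap_apply_of_ne_of_ne hx0 hx1, Equiv.swap_apply_of_ne_of_ne hx1 hxi]

lemma gM0 (hi1 : i ≠ 1) (h01 : (0 : Fin n) ≠ 1) : gMinus n i 0 = 1 := by
  simp [gMinus, Equiv.Perm.mul_apply,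
    Equiv.swap_apply_of_ne_of_ne (Ne.symm h01) (Ne.symm hi1)]

lemma gM1 : gMinus n i 1 = i := by
  simp [gMinus, Equiv.Perm.mul_apply]

lemma gMi (hi0 : i ≠ 0) (hi1 : i ≠ 1) : gMinus n i i = 0 := by
  simp [gMinus, Equiv.Perm.mul_apply,
    Equiv.swap_apply_of_ne_of_ne hi0 hi1]

lemma gMx (hi0 : i ≠ 0) (hi1 : i ≠ 1) {x : Fin n} (hx0 : x ≠ 0) (hx1 : x ≠ 1) (hxi : x ≠ i) :
    gMinus n i x = x := by
  simp [gMinus, Equiv.Perm.mul_apply,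
    Equiv.swap_apply_of_ne_of_ne hx0 hx1, Equiv.swap_apply_of_ne_of_ne hx0 hxi]

/-- `gPlus * gMinus = 1` -/
lemma gP_mul_gM (hi0 : i ≠ 0) (hi1 : i ≠ 1) (h01 : (0 : Fin n) ≠ 1) : gPlus n i * gMinus n i = 1 := by
  ext x
  by_cases hx0 : x = 0
  · subst hx0; simp [Equiv.Perm.mul_apply, gM0 hi1 h01, gP1 hi0 h01]
  by_cases hx1 : x = 1
  · subst hx1; simp [Equiv.Perm.mul_apply, gM1, gPi hi0 hi1]
  by_cases hxi : x = i
  · subst hxi; simp [Equiv.Perm.mul_apply, gMi hi0 hi1, gP0]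
  · simp [Equiv.Perm.mul_apply, gMx hi0 hi1 hx0 hx1 hxi, gPx hi0 hi1 h01 hx0 hx1 hxi]

lemma gM_eq_inv (hi0 : i ≠ 0) (hi1 : i ≠ 1) (h01 : (0 : Fin n) ≠ 1) : gMinus n i = (gPlus n i)⁻¹ :=
  Eq.symm (inv_eq_of_mul_eq_one_right (gP_mul_gM hi0 hi1 h01))

lemma gP_eq_inv (hi0 : i ≠ 0) (hi1 : i ≠ 1) (h01 : (0 : Fin n) ≠ 1) : gPlus n i = (gMinus n i)⁻¹ := by
  rw [gM_eq_inv hi0 hi1 h01]; simp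

/-- `gMinus * gMinus = gPlus` -/
lemma gM_mul_gM (hi0 : i ≠ 0) (hi1 : i ≠ 1) (h01 : (0 : Fin n) ≠ 1) : gMinus n i * gMinus n i = gPlus n i := by
  ext x
  by_cases hx0 : x = 0
  · subst hx0; simp [Equiv.Perm.mul_apply, gM0 hi1 h01, gM1, gP0]
  by_cases hx1 : x = 1
  · subst hx1; simp [Equiv.Perm.mul_apply, gM1, gMi hi0 hi1, gP1 hi0 h01]
  by_cases hxi : x = i
  · subst hxi; simp [Equiv.Perm.mul_apply, gMi hi0 hi1, gM0 hi1 h01, gPi hi0 hi1]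
  · simp [Equiv.Perm.mul_apply, gMx hi0 hi1 hx0 hx1 hxi, gPx hi0 hi1 h01 hx0 hx1 hxi]

lemma gP_mul_gP (hi0 : i ≠ 0) (hi1 : i ≠ 1) (h01 : (0 : Fin n) ≠ 1) : gPlus n i * gPlus n i = gMinus n i := by
  have h := gM_mul_gM hi0 hi1 h01
  rw [gM_eq_inv hi0 hi1 h01] at h ⊢
  rw [← mul_inv_rev] at h
  calc gPlus n i * gPlus n i = ((gPlus n i * gPlus n i)⁻¹)⁻¹ := by simp
  _ = _ := by rw [h]

end eval

lemma isGen_inv (hn : 4 ≤ n) {g : Equiv.Perm (Fin n)} (h : isGen n g) :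
    isGen n g⁻¹ := by
  obtain ⟨i, hi, h | h⟩ := h <;> subst h <;> refine ⟨i, hi, ?_⟩
  · right; rw [gM_eq_inv (ne01 hn hi).1 (ne01 hn hi).2 (zero_ne_one hn)]
  · left; rw [gP_eq_inv (ne01 hn hi).1 (ne01 hn hi).2 (zero_ne_one hn)]

/-- canonical candidates for the left factor -/
noncomputable def eOne (n : ℕ) [NeZero n] (w : Equiv.Perm (Fin n)) : Equiv.Perm (Fin n) :=
  gMinus n (if w 1 = 1 then w (w 0) else w 0)

noncomputable def eTwo (n : ℕ) [NeZero n] (w : Equiv.Perm (Fin n)) : Equiv.Perm (Fin n) :=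
  gPlus n (if w 0 = 0 then w (w 1) else w 1)

/-- Key lemma: any factorization of a non-identity, non-generator `w` as a product
of two generators has left factor `eOne w` or `eTwo w`. -/
lemma key (hn : 4 ≤ n) {i j : Fin n} (hi : 2 ≤ i.val) (hj : 2 ≤ j.val)
    {a c w : Equiv.Perm (Fin n)}
    (ha : a = gPlus n i ∨ a = gMinus n i) (hc : c = gPlus n j ∨ c = gMinus n j)
    (hw : w = a * c) (hw1 : w ≠ 1) (hw2 : ¬ isGen n w) :
    a = eOne n w ∨ a = eTwo n w := by
  have h01 := zero_ne_one hn
  obtain ⟨hi0, hi1⟩ := ne01 hn hi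
  obtain ⟨hj0, hj1⟩ := ne01 hn hj
  by_cases hij : i = j
  · -- products are identity or generators: contradiction
    subst hij
    exfalso
    rcases ha with ha | ha <;> rcases hc with hc | hc <;> subst ha <;> subst hc <;> subst hw
    · exact hw2 ⟨i, hi, Or.inr (gP_mul_gP hi0 hi1 h01)⟩
    · exact hw1 (gP_mul_gM hi0 hi1 h01)
    · rw [gM_eq_inv hi0 hi1 h01] at hw1; simp at hw1
    · exact hw2 ⟨i, hi, Or.inl (gM_mul_gM hi0 hi1 h01)⟩
  · have hji : j ≠ i := Ne.symm hij
    rcases ha with ha | ha <;> rcases hc with hc | hc <;> subst ha <;> subst hc <;> subst hw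
    · -- a = gPlus i, c = gPlus j : w = (0 j)(1 i), use eTwo
      right
      have h0 : (gPlus n i * gPlus n j) 0 = j := by
        simp [Equiv.Perm.mul_apply, gP0, gPx hi0 hi1 h01 hj0 hj1 hji]
      have h1 : (gPlus n i * gPlus n j) 1 = i := by
        simp [Equiv.Perm.mul_apply, gP1 hj0 h01, gP0]
      rw [eTwo, h0, if_neg hj0, h1]
    · -- a = gPlus i, c = gMinus j : w = (1 j i), use eTwo
      right
      have h0 : (gPlus n i * gMinus n j) 0 = 0 := by
        simp [Equiv.Perm.mul_apply, gM0 hj1 h01, gP1 hi0 h01]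
      have h1 : (gPlus n i * gMinus n j) 1 = j := by
        simp [Equiv.Perm.mul_apply, gM1, gPx hi0 hi1 h01 hj0 hj1 hji]
      have hj' : (gPlus n i * gMinus n j) j = i := by
        simp [Equiv.Perm.mul_apply, gMi hj0 hj1, gP0]
      rw [eTwo, h0, if_pos rfl, h1, hj']
    · -- a = gMinus i, c = gPlus j : w = (0 j i), use eOne
      left
      have h1 : (gMinus n i * gPlus n j) 1 = 1 := by
        simp [Equiv.Perm.mul_apply, gP1 hj0 h01, gM0 hi1 h01]
      have h0 : (gMinus n i * gPlus n j) 0 = j := by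
        simp [Equiv.Perm.mul_apply, gP0, gMx hi0 hi1 hj0 hj1 hji]
      have hj' : (gMinus n i * gPlus n j) j = i := by
        simp [Equiv.Perm.mul_apply, gPi hj0 hj1, gM1]
      rw [eOne, h1, if_pos rfl, h0, hj']
    · -- a = gMinus i, c = gMinus j : w = (0 i)(1 j), use eOne
      left
      have h0 : (gMinus n i * gMinus n j) 0 = i := by
        simp [Equiv.Perm.mul_apply, gM0 hj1 h01, gM1]
      have h1 : (gMinus n i * gMinus n j) 1 = j := by
        simp [Equiv.Perm.mul_apply, gM1, gMx hi0 hi1 hj0 hj1 hji]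
      rw [eOne, h1, if_neg hj1, h0]

end AGaux


namespace AGaux

variable {n : ℕ} [NeZero n]

lemma adj_factor (hn : 4 ≤ n) {p v : {p : Equiv.Perm (Fin n) // Equiv.Perm.sign p = 1}}
    (h : (AG n).Adj p v) : ∃ g, isGen n g ∧ v.1 = p.1 * g := by
  rw [AG, SimpleGraph.fromRel_adj] at h
  obtain ⟨hne, h | h⟩ := h
  · obtain ⟨i, hi, h | h⟩ := h
    · exact ⟨gPlus n i, ⟨i, hi, Or.inl rfl⟩, h⟩
    · exact ⟨gMinus n i, ⟨i, hi, Or.inr rfl⟩, h⟩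
  · obtain ⟨i, hi, h | h⟩ := h
    · exact ⟨(gPlus n i)⁻¹, isGen_inv hn ⟨i, hi, Or.inl rfl⟩, by rw [h]; group⟩
    · exact ⟨(gMinus n i)⁻¹, isGen_inv hn ⟨i, hi, Or.inr rfl⟩, by rw [h]; group⟩

end AGaux

theorem stmt_0 (n : ℕ) [NeZero n] (hn : 4 ≤ n)
    (p q : {p : Equiv.Perm (Fin n) // Equiv.Perm.sign p = 1})
    (hpq : p ≠ q) (hadj : ¬ (AG n).Adj p q) :
    {v | (AG n).Adj p v ∧ (AG n).Adj q v}.ncard ≤ 2 := by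
  classical
  open AGaux in
  set w : Equiv.Perm (Fin n) := p.1⁻¹ * q.1 with hwdef
  have hw1 : w ≠ 1 := by
    intro h
    exact hpq (Subtype.ext (by
      have : p.1 * (p.1⁻¹ * q.1) = p.1 * 1 := by rw [← hwdef, h]
      simpa [mul_assoc] using this.symm))
  have hwgen : ¬ AGaux.isGen n w := by
    rintro ⟨i, hi, h | h⟩ <;> [skip; skip] <;>
    · apply hadj
      rw [AG, SimpleGraph.fromRel_adj]
      refine ⟨hpq, Or.inl ⟨i, hi, ?_⟩⟩
      first
      | exact Or.inl (by rw [← h, hwdef]; group)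
      | exact Or.inr (by rw [← h, hwdef]; group)
  set S := {v | (AG n).Adj p v ∧ (AG n).Adj q v} with hS
  have hsub : Subtype.val '' S ⊆
      {p.1 * AGaux.eOne n w, p.1 * AGaux.eTwo n w} := by
    rintro _ ⟨v, ⟨hpv, hqv⟩, rfl⟩
    obtain ⟨a, ⟨i, hi, ha⟩, hva⟩ := AGaux.adj_factor hn hpv
    obtain ⟨b, hbgen, hvb⟩ := AGaux.adj_factor hn hqv
    obtain ⟨j, hj, hc⟩ := AGaux.isGen_inv hn hbgen
    have hwac : w = a * b⁻¹ := by
      rw [hwdef]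
      have : q.1 = v.1 * b⁻¹ := by rw [hvb]; group
      rw [this, hva]; group
    rcases AGaux.key hn hi hj ha hc hwac hw1 hwgen with h | h
    · exact Or.inl (by rw [hva, h])
    · exact Or.inr (by rw [hva, h]; rfl)
  calc S.ncard = (Subtype.val '' S).ncard :=
        (Set.ncard_image_of_injective S Subtype.val_injective).symm
    _ ≤ ({p.1 * AGaux.eOne n w, p.1 * AGaux.eTwo n w} : Set _).ncard :=
        Set.ncard_le_ncard hsub (Set.toFinite _)
    _ ≤ 2 := (Set.ncard_insert_le _ _).trans (by simp)
end

section
/- Let S be an independent set of size 3 in the alternating group graph AG_n with n ≥ 4. Then the neighborhood of S satisfies |N(S)| ≥ 6n - 16. -/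
set_option linter.unusedVariables false
set_option maxHeartbeats 1000000


open Equiv Set Pointwise

section AGaux

variable {n : ℕ} [NeZero n]

lemma val1 (hn : 4 ≤ n) : ((1 : Fin n) : ℕ) = 1 := by
  rw [Fin.val_one']; exact Nat.mod_eq_of_lt (by omega)

lemma zne1 (hn : 4 ≤ n) : (0 : Fin n) ≠ 1 := by
  intro h
  have := congrArg Fin.val h
  rw [Fin.val_zero, val1 hn] at this
  omega

lemma ine0 {i : Fin n} (hi : 2 ≤ i.val) : i ≠ 0 := by
  intro h; rw [h, Fin.val_zero] at hi; omega

lemma ine1 (hn : 4 ≤ n) {i : Fin n} (hi : 2 ≤ i.val) : i ≠ 1 := by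
  intro h; rw [h, val1 hn] at hi; omega


variable (n) in
/-- double transposition (0 x)(1 y) -/
def DTp (x y : Fin n) : Equiv.Perm (Fin n) := Equiv.swap 0 x * Equiv.swap 1 y

section apply_lemmas

variable {i j x y z : Fin n}

-- gPlus = (0 i 1) : 0 ↦ i ↦ 1 ↦ 0
lemma gP0 (hi : 2 ≤ i.val) : gPlus n i 0 = i := by
  rw [gPlus, Equiv.Perm.mul_apply, Equiv.swap_apply_left, Equiv.swap_apply_left]

lemma gP1 (hn : 4 ≤ n) (hi : 2 ≤ i.val) : gPlus n i 1 = 0 := by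
  rw [gPlus, Equiv.Perm.mul_apply, Equiv.swap_apply_right,
    Equiv.swap_apply_of_ne_of_ne (zne1 hn) (Ne.symm (ine0 hi))]

lemma gPi (hn : 4 ≤ n) (hi : 2 ≤ i.val) : gPlus n i i = 1 := by
  rw [gPlus, Equiv.Perm.mul_apply,
    Equiv.swap_apply_of_ne_of_ne (ine0 hi) (ine1 hn hi), Equiv.swap_apply_right]

lemma gPo (hn : 4 ≤ n) (hi : 2 ≤ i.val) (h0 : z ≠ 0) (h1 : z ≠ 1) (hzi : z ≠ i) :
    gPlus n i z = z := by
  rw [gPlus, Equiv.Perm.mul_apply, Equiv.swap_apply_of_ne_of_ne h0 h1,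
    Equiv.swap_apply_of_ne_of_ne h1 hzi]

-- gMinus = (0 1 i) : 0 ↦ 1 ↦ i ↦ 0
lemma gM0 (hn : 4 ≤ n) (hi : 2 ≤ i.val) : gMinus n i 0 = 1 := by
  rw [gMinus, Equiv.Perm.mul_apply, Equiv.swap_apply_left,
    Equiv.swap_apply_of_ne_of_ne (Ne.symm (zne1 hn)) (Ne.symm (ine1 hn hi))]

lemma gM1 (hn : 4 ≤ n) (hi : 2 ≤ i.val) : gMinus n i 1 = i := by
  rw [gMinus, Equiv.Perm.mul_apply, Equiv.swap_apply_right, Equiv.swap_apply_left]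

lemma gMi (hn : 4 ≤ n) (hi : 2 ≤ i.val) : gMinus n i i = 0 := by
  rw [gMinus, Equiv.Perm.mul_apply,
    Equiv.swap_apply_of_ne_of_ne (ine0 hi) (ine1 hn hi), Equiv.swap_apply_right]

lemma gMo (hn : 4 ≤ n) (hi : 2 ≤ i.val) (h0 : z ≠ 0) (h1 : z ≠ 1) (hzi : z ≠ i) :
    gMinus n i z = z := by
  rw [gMinus, Equiv.Perm.mul_apply, Equiv.swap_apply_of_ne_of_ne h0 h1,
    Equiv.swap_apply_of_ne_of_ne h0 hzi]

-- DTp x y = (0 x)(1 y)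
lemma dt0 (hn : 4 ≤ n) (hx : 2 ≤ x.val) (hy : 2 ≤ y.val) : DTp n x y 0 = x := by
  rw [DTp, Equiv.Perm.mul_apply,
    Equiv.swap_apply_of_ne_of_ne (zne1 hn) (Ne.symm (ine0 hy)), Equiv.swap_apply_left]

lemma dt1 (hn : 4 ≤ n) (hx : 2 ≤ x.val) (hy : 2 ≤ y.val) (hxy : x ≠ y) : DTp n x y 1 = y := by
  rw [DTp, Equiv.Perm.mul_apply, Equiv.swap_apply_left,
    Equiv.swap_apply_of_ne_of_ne (ine0 hy) (Ne.symm hxy)]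

lemma dtx (hn : 4 ≤ n) (hx : 2 ≤ x.val) (hy : 2 ≤ y.val) (hxy : x ≠ y) : DTp n x y x = 0 := by
  rw [DTp, Equiv.Perm.mul_apply,
    Equiv.swap_apply_of_ne_of_ne (ine1 hn hx) hxy, Equiv.swap_apply_right]

lemma dty (hn : 4 ≤ n) (hx : 2 ≤ x.val) (hy : 2 ≤ y.val) : DTp n x y y = 1 := by
  rw [DTp, Equiv.Perm.mul_apply, Equiv.swap_apply_right,
    Equiv.swap_apply_of_ne_of_ne (Ne.symm (zne1 hn)) (Ne.symm (ine1 hn hx))]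

lemma dto (hn : 4 ≤ n) (hx : 2 ≤ x.val) (hy : 2 ≤ y.val) (h0 : z ≠ 0) (h1 : z ≠ 1)
    (hzx : z ≠ x) (hzy : z ≠ y) : DTp n x y z = z := by
  rw [DTp, Equiv.Perm.mul_apply, Equiv.swap_apply_of_ne_of_ne h1 hzy,
    Equiv.swap_apply_of_ne_of_ne h0 hzx]

end apply_lemmas

variable (n) in
/-- The generating set: all 3-cycles moving both 0 and 1. -/
def TTs : Set (Equiv.Perm (Fin n)) :=
  {g | ∃ i : Fin n, 2 ≤ i.val ∧ (g = gPlus n i ∨ g = gMinus n i)}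

section basic

variable (hn : 4 ≤ n) {i j x y z : Fin n} {t s w : Equiv.Perm (Fin n)}

lemma memP (hi : 2 ≤ i.val) : gPlus n i ∈ TTs n := ⟨i, hi, Or.inl rfl⟩
lemma memM (hi : 2 ≤ i.val) : gMinus n i ∈ TTs n := ⟨i, hi, Or.inr rfl⟩

lemma P_ne_one (hn : 4 ≤ n) (hi : 2 ≤ i.val) : gPlus n i ≠ 1 := by
  intro h
  have := congrArg (fun f : Equiv.Perm (Fin n) => f 0) h
  simp only [Equiv.Perm.one_apply, gP0 hi] at this
  exact ine0 hi this

lemma M_ne_one (hn : 4 ≤ n) (hi : 2 ≤ i.val) : gMinus n i ≠ 1 := by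
  intro h
  have := congrArg (fun f : Equiv.Perm (Fin n) => f 0) h
  simp only [Equiv.Perm.one_apply, gM0 hn hi] at this
  exact zne1 hn this.symm

lemma TTs_ne_one (hn : 4 ≤ n) (ht : t ∈ TTs n) : t ≠ 1 := by
  obtain ⟨i, hi, h | h⟩ := ht
  · exact h ▸ P_ne_one hn hi
  · exact h ▸ M_ne_one hn hi

lemma P_inj (hn : 4 ≤ n) (hi : 2 ≤ i.val) (hj : 2 ≤ j.val)
    (h : gPlus n i = gPlus n j) : i = j := by
  have := congrArg (fun f : Equiv.Perm (Fin n) => f 0) h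
  simpa only [gP0 hi, gP0 hj] using this

lemma M_inj (hn : 4 ≤ n) (hi : 2 ≤ i.val) (hj : 2 ≤ j.val)
    (h : gMinus n i = gMinus n j) : i = j := by
  have := congrArg (fun f : Equiv.Perm (Fin n) => f 1) h
  simpa only [gM1 hn hi, gM1 hn hj] using this

lemma P_ne_M (hn : 4 ≤ n) (hi : 2 ≤ i.val) (hj : 2 ≤ j.val) :
    gPlus n i ≠ gMinus n j := by
  intro h
  have := congrArg (fun f : Equiv.Perm (Fin n) => f 0) h
  simp only [gP0 hi, gM0 hn hj] at this
  rw [this, val1 hn] at hi; omega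

/-- gPlus * gMinus = 1 -/
lemma PM_one (hn : 4 ≤ n) (hi : 2 ≤ i.val) : gPlus n i * gMinus n i = 1 := by
  ext z
  rw [Equiv.Perm.mul_apply, Equiv.Perm.one_apply]
  by_cases h0 : z = 0
  · rw [h0, gM0 hn hi, gP1 hn hi]
  by_cases h1 : z = 1
  · rw [h1, gM1 hn hi, gPi hn hi]
  by_cases hzi : z = i
  · rw [hzi, gMi hn hi, gP0 hi]
  · rw [gMo hn hi h0 h1 hzi, gPo hn hi h0 h1 hzi]

lemma P_inv (hn : 4 ≤ n) (hi : 2 ≤ i.val) : (gPlus n i)⁻¹ = gMinus n i :=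
  inv_eq_of_mul_eq_one_right (PM_one hn hi)

lemma MP_one (hn : 4 ≤ n) (hi : 2 ≤ i.val) : gMinus n i * gPlus n i = 1 := by
  rw [← P_inv hn hi, inv_mul_cancel]

lemma TTs_inv (hn : 4 ≤ n) (ht : t ∈ TTs n) : t⁻¹ ∈ TTs n := by
  obtain ⟨i, hi, h | h⟩ := ht
  · subst h; rw [inv_eq_of_mul_eq_one_right (PM_one hn hi)]; exact memM hi
  · subst h; rw [inv_eq_of_mul_eq_one_right (MP_one hn hi)]; exact memP hi

/-- gPlus i ^ 2 = gMinus i -/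
lemma PP_eq (hn : 4 ≤ n) (hi : 2 ≤ i.val) : gPlus n i * gPlus n i = gMinus n i := by
  ext z
  rw [Equiv.Perm.mul_apply]
  by_cases h0 : z = 0
  · rw [h0, gP0 hi, gPi hn hi, gM0 hn hi]
  by_cases h1 : z = 1
  · rw [h1, gP1 hn hi, gP0 hi, gM1 hn hi]
  by_cases hzi : z = i
  · rw [hzi, gPi hn hi, gP1 hn hi, gMi hn hi]
  · rw [gPo hn hi h0 h1 hzi, gPo hn hi h0 h1 hzi, gMo hn hi h0 h1 hzi]

lemma MM_eq (hn : 4 ≤ n) (hi : 2 ≤ i.val) : gMinus n i * gMinus n i = gPlus n i := by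
  ext z
  rw [Equiv.Perm.mul_apply]
  by_cases h0 : z = 0
  · rw [h0, gM0 hn hi, gM1 hn hi, gP0 hi]
  by_cases h1 : z = 1
  · rw [h1, gM1 hn hi, gMi hn hi, gP1 hn hi]
  by_cases hzi : z = i
  · rw [hzi, gMi hn hi, gM0 hn hi, gPi hn hi]
  · rw [gMo hn hi h0 h1 hzi, gMo hn hi h0 h1 hzi, gPo hn hi h0 h1 hzi]

/-- gPlus i * gPlus j = (0 j)(1 i) for i ≠ j -/
lemma PPd_eq (hn : 4 ≤ n) (hi : 2 ≤ i.val) (hj : 2 ≤ j.val) (hij : i ≠ j) :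
    gPlus n i * gPlus n j = DTp n j i := by
  ext z
  rw [Equiv.Perm.mul_apply]
  by_cases h0 : z = 0
  · rw [h0, gP0 hj, gPo hn hi (ine0 hj) (ine1 hn hj) (Ne.symm hij), dt0 hn hj hi]
  by_cases h1 : z = 1
  · rw [h1, gP1 hn hj, gP0 hi, dt1 hn hj hi (Ne.symm hij)]
  by_cases hzj : z = j
  · rw [hzj, gPi hn hj, gP1 hn hi, dtx hn hj hi (Ne.symm hij)]
  by_cases hzi : z = i
  · rw [hzi, gPo hn hj (ine0 hi) (ine1 hn hi) hij, gPi hn hi, dty hn hj hi]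
  · rw [gPo hn hj h0 h1 hzj, gPo hn hi h0 h1 hzi, dto hn hj hi h0 h1 hzj hzi]

/-- gMinus i * gMinus j = (0 i)(1 j) for i ≠ j -/
lemma MMd_eq (hn : 4 ≤ n) (hi : 2 ≤ i.val) (hj : 2 ≤ j.val) (hij : i ≠ j) :
    gMinus n i * gMinus n j = DTp n i j := by
  ext z
  rw [Equiv.Perm.mul_apply]
  by_cases h0 : z = 0
  · rw [h0, gM0 hn hj, gM1 hn hi, dt0 hn hi hj]
  by_cases h1 : z = 1
  · rw [h1, gM1 hn hj, gMo hn hi (ine0 hj) (ine1 hn hj) (Ne.symm hij), dt1 hn hi hj hij]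
  by_cases hzj : z = j
  · rw [hzj, gMi hn hj, gM0 hn hi, dty hn hi hj]
  by_cases hzi : z = i
  · rw [hzi, gMo hn hj (ine0 hi) (ine1 hn hi) hij, gMi hn hi, dtx hn hi hj hij]
  · rw [gMo hn hj h0 h1 hzj, gMo hn hi h0 h1 hzi, dto hn hi hj h0 h1 hzi hzj]

/-- (0 x)(1 y) * gMinus x = gPlus y -/
lemma DTM_eq (hn : 4 ≤ n) (hx : 2 ≤ x.val) (hy : 2 ≤ y.val) (hxy : x ≠ y) :
    DTp n x y * gMinus n x = gPlus n y := by
  ext z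
  rw [Equiv.Perm.mul_apply]
  by_cases h0 : z = 0
  · rw [h0, gM0 hn hx, dt1 hn hx hy hxy, gP0 hy]
  by_cases h1 : z = 1
  · rw [h1, gM1 hn hx, dtx hn hx hy hxy, gP1 hn hy]
  by_cases hzy : z = y
  · rw [hzy, gMo hn hx (ine0 hy) (ine1 hn hy) (Ne.symm hxy), dty hn hx hy, gPi hn hy]
  by_cases hzx : z = x
  · rw [hzx, gMi hn hx, dt0 hn hx hy, gPo hn hy (ine0 hx) (ine1 hn hx) hxy]
  · rw [gMo hn hx h0 h1 hzx, dto hn hx hy h0 h1 hzx hzy, gPo hn hy h0 h1 hzy]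

/-- (0 x)(1 y) * gPlus y = gMinus x -/
lemma DTP_eq (hn : 4 ≤ n) (hx : 2 ≤ x.val) (hy : 2 ≤ y.val) (hxy : x ≠ y) :
    DTp n x y * gPlus n y = gMinus n x := by
  ext z
  rw [Equiv.Perm.mul_apply]
  by_cases h0 : z = 0
  · rw [h0, gP0 hy, dty hn hx hy, gM0 hn hx]
  by_cases h1 : z = 1
  · rw [h1, gP1 hn hy, dt0 hn hx hy, gM1 hn hx]
  by_cases hzy : z = y
  · rw [hzy, gPi hn hy, dt1 hn hx hy hxy, gMo hn hx (ine0 hy) (ine1 hn hy) (Ne.symm hxy)]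
  by_cases hzx : z = x
  · rw [hzx, gPo hn hy (ine0 hx) (ine1 hn hx) hxy, dtx hn hx hy hxy, gMi hn hx]
  · rw [gPo hn hy h0 h1 hzy, dto hn hx hy h0 h1 hzx hzy, gMo hn hx h0 h1 hzx]

/-- (0 x)(1 y) is an involution -/
lemma DT_invol (hn : 4 ≤ n) (hx : 2 ≤ x.val) (hy : 2 ≤ y.val) (hxy : x ≠ y) :
    DTp n x y * DTp n x y = 1 := by
  ext z
  rw [Equiv.Perm.mul_apply, Equiv.Perm.one_apply]
  by_cases h0 : z = 0
  · rw [h0, dt0 hn hx hy, dtx hn hx hy hxy]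
  by_cases h1 : z = 1
  · rw [h1, dt1 hn hx hy hxy, dty hn hx hy]
  by_cases hzx : z = x
  · rw [hzx, dtx hn hx hy hxy, dt0 hn hx hy]
  by_cases hzy : z = y
  · rw [hzy, dty hn hx hy, dt1 hn hx hy hxy]
  · rw [dto hn hx hy h0 h1 hzx hzy, dto hn hx hy h0 h1 hzx hzy]

lemma DT_notMem (hn : 4 ≤ n) (hx : 2 ≤ x.val) (hy : 2 ≤ y.val) (hxy : x ≠ y) :
    DTp n x y ∉ TTs n := by
  rintro ⟨i, hi, h | h⟩
  · have := congrArg (fun f : Equiv.Perm (Fin n) => f 1) h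
    simp only [dt1 hn hx hy hxy, gP1 hn hi] at this
    rw [this, Fin.val_zero] at hy; omega
  · have := congrArg (fun f : Equiv.Perm (Fin n) => f x) h
    have hx1 := dtx hn hx hy hxy
    by_cases hxi : x = i
    · subst hxi
      simp only [dtx hn hx hy hxy, gMi hn hi] at this
      -- fine: both 0, no contradiction here; use another point
      have h2 := congrArg (fun f : Equiv.Perm (Fin n) => f 0) h
      simp only [dt0 hn hx hy, gM0 hn hi] at h2
      rw [h2, val1 hn] at hx; omega
    · simp only [dtx hn hx hy hxy, gMo hn hi (ine0 hx) (ine1 hn hx) hxi] at this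
      rw [← this, Fin.val_zero] at hx; omega

end basic

section key

variable {i j x y z : Fin n} {t s w : Equiv.Perm (Fin n)}

/-- KEY classification: representations of `w` as a product of two generators. -/
lemma key (hn : 4 ≤ n) (ht : t ∈ TTs n) (hs : s ∈ TTs n) (hw : w = t * s)
    (hwT : w ∉ TTs n) (hw1 : w ≠ 1) :
    (∃ x y : Fin n, 2 ≤ x.val ∧ 2 ≤ y.val ∧ x ≠ y ∧ w = DTp n x y ∧
      (t = gPlus n y ∨ t = gMinus n x))
    ∨ (w 0 = 0 ∧ ∃ i : Fin n, 2 ≤ i.val ∧ 2 ≤ (w 1).val ∧ w i = 1 ∧ t = gPlus n i)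
    ∨ (w 1 = 1 ∧ ∃ i : Fin n, 2 ≤ i.val ∧ 2 ≤ (w 0).val ∧ w i = 0 ∧ t = gMinus n i) := by
  obtain ⟨i, hi, hti⟩ := ht
  obtain ⟨j, hj, hsj⟩ := hs
  by_cases hij : i = j
  · subst hij
    exfalso
    rcases hti with rfl | rfl <;> rcases hsj with rfl | rfl
    · exact hwT (hw ▸ PP_eq hn hi ▸ memM hi)
    · exact hw1 (hw.trans (PM_one hn hi))
    · exact hw1 (hw.trans (MP_one hn hi))
    · exact hwT (hw ▸ MM_eq hn hi ▸ memP hi)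
  · rcases hti with rfl | rfl <;> rcases hsj with rfl | rfl
    · -- P i * P j = DTp j i
      left
      exact ⟨j, i, hj, hi, Ne.symm hij, hw.trans (PPd_eq hn hi hj hij), Or.inl rfl⟩
    · -- P i * M j : branch D
      right; left
      have h0 : w 0 = 0 := by
        rw [hw, Equiv.Perm.mul_apply, gM0 hn hj, gP1 hn hi]
      have h1 : w 1 = j := by
        rw [hw, Equiv.Perm.mul_apply, gM1 hn hj,
          gPo hn hi (ine0 hj) (ine1 hn hj) (Ne.symm hij)]
      have hwi : w i = 1 := by
        rw [hw, Equiv.Perm.mul_apply, gMo hn hj (ine0 hi) (ine1 hn hi) hij, gPi hn hi]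
      exact ⟨h0, i, hi, by rw [h1]; exact hj, hwi, rfl⟩
    · -- M i * P j : branch E
      right; right
      have h1 : w 1 = 1 := by
        rw [hw, Equiv.Perm.mul_apply, gP1 hn hj, gM0 hn hi]
      have h0 : w 0 = j := by
        rw [hw, Equiv.Perm.mul_apply, gP0 hj,
          gMo hn hi (ine0 hj) (ine1 hn hj) (Ne.symm hij)]
      have hwi : w i = 0 := by
        rw [hw, Equiv.Perm.mul_apply, gPo hn hj (ine0 hi) (ine1 hn hi) hij, gMi hn hi]
      exact ⟨h1, i, hi, by rw [h0]; exact hj, hwi, rfl⟩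
    · -- M i * M j = DTp i j
      left
      exact ⟨i, j, hi, hj, hij, hw.trans (MMd_eq hn hi hj hij), Or.inr rfl⟩

/-- decompose membership in `TTs ∩ w • TTs` into a product representation. -/
lemma mem_inter_rep (hn : 4 ≤ n) (h : t ∈ TTs n ∩ w • TTs n) :
    t ∈ TTs n ∧ ∃ s ∈ TTs n, w = t * s := by
  obtain ⟨ht, hw⟩ := h
  rw [Set.mem_smul_set_iff_inv_smul_mem, smul_eq_mul] at hw
  exact ⟨ht, (w⁻¹ * t)⁻¹, TTs_inv hn hw, by group⟩

/-- If w fixes 0 or 1, at most one common neighbor. -/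
lemma card_le_one (hn : 4 ≤ n) (hwT : w ∉ TTs n) (hw1 : w ≠ 1)
    (h : w 0 = 0 ∨ w 1 = 1) : (TTs n ∩ w • TTs n).ncard ≤ 1 := by
  rcases h with h | h
  · have hsub : TTs n ∩ w • TTs n ⊆ {gPlus n (w.symm 1)} := by
      intro t hmem
      obtain ⟨ht, s, hs, hws⟩ := mem_inter_rep hn hmem
      rcases key hn ht hs hws hwT hw1 with ⟨x, y, hx, hy, hxy, hdt, -⟩ | ⟨-, i, hi, -, hwi, rfl⟩ |
        ⟨-, i, -, hw0, -, -⟩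
      · rw [hdt, dt0 hn hx hy] at h; exact absurd h (ine0 hx)
      · have : w.symm 1 = i := by rw [Equiv.symm_apply_eq]; exact hwi.symm
        simp [this]
      · rw [h, Fin.val_zero] at hw0; omega
    exact (Set.ncard_le_ncard hsub (Set.finite_singleton _)).trans
      (le_of_eq (Set.ncard_singleton _))
  · have hsub : TTs n ∩ w • TTs n ⊆ {gMinus n (w.symm 0)} := by
      intro t hmem
      obtain ⟨ht, s, hs, hws⟩ := mem_inter_rep hn hmem
      rcases key hn ht hs hws hwT hw1 with ⟨x, y, hx, hy, hxy, hdt, -⟩ | ⟨-, i, -, hw1v, -, -⟩ |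
        ⟨-, i, hi, -, hwi, rfl⟩
      · rw [hdt, dt1 hn hx hy hxy] at h; exact absurd h (ine1 hn hy)
      · rw [h, val1 hn] at hw1v; omega
      · have : w.symm 0 = i := by rw [Equiv.symm_apply_eq]; exact hwi.symm
        simp [this]
    exact (Set.ncard_le_ncard hsub (Set.finite_singleton _)).trans
      (le_of_eq (Set.ncard_singleton _))

/-- At most two common neighbors of nonadjacent vertices. -/
lemma card_le_two (hn : 4 ≤ n) (hwT : w ∉ TTs n) (hw1 : w ≠ 1) :
    (TTs n ∩ w • TTs n).ncard ≤ 2 := by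
  by_cases h0 : w 0 = 0
  · exact (card_le_one hn hwT hw1 (Or.inl h0)).trans (by omega)
  by_cases h1 : w 1 = 1
  · exact (card_le_one hn hwT hw1 (Or.inr h1)).trans (by omega)
  have hsub : TTs n ∩ w • TTs n ⊆ {gPlus n (w 1), gMinus n (w 0)} := by
    intro t hmem
    obtain ⟨ht, s, hs, hws⟩ := mem_inter_rep hn hmem
    rcases key hn ht hs hws hwT hw1 with ⟨x, y, hx, hy, hxy, hdt, hc⟩ | ⟨hw0, -⟩ | ⟨hw1', -⟩
    · have e0 : w 0 = x := by rw [hdt, dt0 hn hx hy]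
      have e1 : w 1 = y := by rw [hdt, dt1 hn hx hy hxy]
      rcases hc with rfl | rfl
      · simp [e1]
      · simp [e0]
    · exact absurd hw0 h0
    · exact absurd hw1' h1
  calc (TTs n ∩ w • TTs n).ncard ≤ ({gPlus n (w 1), gMinus n (w 0)} : Set _).ncard :=
        Set.ncard_le_ncard hsub (Set.toFinite _)
    _ ≤ 2 := (Set.ncard_insert_le _ _).trans (by rw [Set.ncard_singleton])

/-- Two common neighbors force the double-transposition shape. -/
lemma two_shape (hn : 4 ≤ n) (hwT : w ∉ TTs n) (hw1 : w ≠ 1)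
    (h2 : 2 ≤ (TTs n ∩ w • TTs n).ncard) :
    ∃ x y : Fin n, 2 ≤ x.val ∧ 2 ≤ y.val ∧ x ≠ y ∧ w = DTp n x y := by
  by_cases h0 : w 0 = 0
  · have := card_le_one hn hwT hw1 (Or.inl h0); omega
  by_cases h1 : w 1 = 1
  · have := card_le_one hn hwT hw1 (Or.inr h1); omega
  obtain ⟨t, hmem, t', hmem', hne⟩ :=
    (Set.one_lt_ncard (s := TTs n ∩ w • TTs n) (Set.toFinite _)).mp (by omega)
  obtain ⟨ht, s, hs, hws⟩ := mem_inter_rep hn hmem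
  rcases key hn ht hs hws hwT hw1 with ⟨x, y, hx, hy, hxy, hdt, -⟩ | ⟨hw0, -⟩ | ⟨hw1', -⟩
  · exact ⟨x, y, hx, hy, hxy, hdt⟩
  · exact absurd hw0 h0
  · exact absurd hw1' h1

end key

section master

variable {w1 w2 w : Equiv.Perm (Fin n)}

lemma mem_smul_TTs (hn : 4 ≤ n) {g t u : Equiv.Perm (Fin n)} (hu : u ∈ TTs n)
    (h : g * u = t) : t ∈ g • TTs n := by
  rw [Set.mem_smul_set_iff_inv_smul_mem, smul_eq_mul, ← h]
  simpa using hu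

lemma master (hn : 4 ≤ n)
    (h1T : w1 ∉ TTs n) (h11 : w1 ≠ 1) (h2T : w2 ∉ TTs n) (h21 : w2 ≠ 1)
    (h3T : w1⁻¹ * w2 ∉ TTs n) (h31 : w1⁻¹ * w2 ≠ 1)
    (c1 : 2 ≤ (TTs n ∩ w1 • TTs n).ncard) (c2 : 2 ≤ (TTs n ∩ w2 • TTs n).ncard) :
    (TTs n ∩ (w1⁻¹ * w2) • TTs n).ncard ≤ (TTs n ∩ w1 • TTs n ∩ w2 • TTs n).ncard := by
  obtain ⟨x, y, hx, hy, hxy, e1⟩ := two_shape hn h1T h11 c1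
  obtain ⟨u, v, hu, hv, huv, e2⟩ := two_shape hn h2T h21 c2
  subst e1; subst e2
  have hinv : (DTp n x y)⁻¹ = DTp n x y := inv_eq_of_mul_eq_one_right (DT_invol hn hx hy hxy)
  rw [hinv] at h3T h31 ⊢
  have h30e : (DTp n x y * DTp n u v) 0 = DTp n x y (DTp n u v 0) := Equiv.Perm.mul_apply _ _ _
  have h31e : (DTp n x y * DTp n u v) 1 = DTp n x y (DTp n u v 1) := Equiv.Perm.mul_apply _ _ _
  by_cases hux : u = x
  · subst hux
    -- w3 fixes 0; and gMinus u is a common neighbor of all three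
    have h30 : (DTp n u y * DTp n u v) 0 = 0 := by
      rw [h30e, dt0 hn hu hv, dtx hn hu hy hxy]
    have hle := card_le_one hn h3T h31 (Or.inl h30)
    have hmem : gMinus n u ∈ TTs n ∩ DTp n u y • TTs n ∩ DTp n u v • TTs n :=
      ⟨⟨memM hu, mem_smul_TTs hn (memP hy) (DTP_eq hn hu hy hxy)⟩,
        mem_smul_TTs hn (memP hv) (DTP_eq hn hu hv huv)⟩
    have hpos : 0 < (TTs n ∩ DTp n u y • TTs n ∩ DTp n u v • TTs n).ncard :=
      (Set.ncard_pos (Set.toFinite _)).mpr ⟨_, hmem⟩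
    omega
  by_cases hvy : v = y
  · subst hvy
    have h31v : (DTp n x v * DTp n u v) 1 = 1 := by
      rw [h31e, dt1 hn hu hv huv, dty hn hx hv]
    have hle := card_le_one hn h3T h31 (Or.inr h31v)
    have hmem : gPlus n v ∈ TTs n ∩ DTp n x v • TTs n ∩ DTp n u v • TTs n :=
      ⟨⟨memP hv, mem_smul_TTs hn (memM hx) (DTM_eq hn hx hv hxy)⟩,
        mem_smul_TTs hn (memM hu) (DTM_eq hn hu hv huv)⟩
    have hpos : 0 < (TTs n ∩ DTp n x v • TTs n ∩ DTp n u v • TTs n).ncard :=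
      (Set.ncard_pos (Set.toFinite _)).mpr ⟨_, hmem⟩
    omega
  · -- no common neighbors of the last pair at all
    have hempty : TTs n ∩ (DTp n x y * DTp n u v) • TTs n = ∅ := by
      rw [Set.eq_empty_iff_forall_notMem]
      intro t hmem
      obtain ⟨ht, s, hs, hws⟩ := mem_inter_rep hn hmem
      by_cases huy : u = y
      · have h30 : (DTp n x y * DTp n u v) 0 = 1 := by
          rw [h30e, dt0 hn hu hv, huy, dty hn hx hy]
        rcases key hn ht hs hws h3T h31 with ⟨x', y', hx', hy', hxy', hdt, -⟩ |
          ⟨hw0, -⟩ | ⟨-, i, -, hw0big, -⟩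
        · rw [hdt, dt0 hn hx' hy'] at h30
          rw [h30, val1 hn] at hx'; omega
        · rw [hw0] at h30; exact zne1 hn h30
        · rw [h30, val1 hn] at hw0big; omega
      by_cases hvx : v = x
      · have h31v : (DTp n x y * DTp n u v) 1 = 0 := by
          rw [h31e, dt1 hn hu hv huv, hvx, dtx hn hx hy hxy]
        rcases key hn ht hs hws h3T h31 with ⟨x', y', hx', hy', hxy', hdt, -⟩ |
          ⟨-, i, -, hw1big, -⟩ | ⟨hw1v, -⟩
        · rw [hdt, dt1 hn hx' hy' hxy'] at h31v
          rw [h31v, Fin.val_zero] at hy'; omega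
        · rw [h31v, Fin.val_zero] at hw1big; omega
        · rw [h31v] at hw1v; exact zne1 hn hw1v
      · have h30 : (DTp n x y * DTp n u v) 0 = u := by
          rw [h30e, dt0 hn hu hv, dto hn hx hy (ine0 hu) (ine1 hn hu) hux huy]
        have h31v : (DTp n x y * DTp n u v) 1 = v := by
          rw [h31e, dt1 hn hu hv huv, dto hn hx hy (ine0 hv) (ine1 hn hv) hvx hvy]
        have hwu : (DTp n x y * DTp n u v) u = x := by
          rw [Equiv.Perm.mul_apply, dtx hn hu hv huv, dt0 hn hx hy]
        rcases key hn ht hs hws h3T h31 with ⟨x', y', hx', hy', hxy', hdt, -⟩ |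
          ⟨hw0, -⟩ | ⟨hw1v, -⟩
        · have ex : x' = u := by
            rw [← h30, hdt, dt0 hn hx' hy']
          have : (DTp n x y * DTp n u v) u = 0 := by
            rw [hdt, ← ex, dtx hn hx' hy' hxy']
          rw [hwu] at this; exact ine0 hx this
        · rw [h30] at hw0; exact ine0 hu hw0
        · rw [h31v] at hw1v; exact ine1 hn hv hw1v
    rw [hempty, Set.ncard_empty]
    exact Nat.zero_le _

end master

section count

variable {w : Equiv.Perm (Fin n)}

lemma TTs_eq : TTs n = (fun i => gPlus n i) '' {i : Fin n | 2 ≤ i.val} ∪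
    (fun i => gMinus n i) '' {i : Fin n | 2 ≤ i.val} := by
  ext g
  constructor
  · rintro ⟨i, hi, h | h⟩
    · exact Or.inl ⟨i, hi, h.symm⟩
    · exact Or.inr ⟨i, hi, h.symm⟩
  · rintro (⟨i, hi, h⟩ | ⟨i, hi, h⟩)
    · exact ⟨i, hi, Or.inl h.symm⟩
    · exact ⟨i, hi, Or.inr h.symm⟩

lemma setge2_ncard (hn : 4 ≤ n) : ({i : Fin n | 2 ≤ i.val}).ncard = n - 2 := by
  have he : {i : Fin n | 2 ≤ i.val} = (Set.univ : Set (Fin n)) \ {0, 1} := by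
    ext i
    simp only [Set.mem_setOf_eq, Set.mem_diff, Set.mem_univ, true_and,
      Set.mem_insert_iff, Set.mem_singleton_iff]
    constructor
    · intro h hc
      rcases hc with rfl | rfl
      · rw [Fin.val_zero] at h; omega
      · rw [val1 hn] at h; omega
    · intro h
      by_contra hlt
      push_neg at hlt
      interval_cases hiv : i.val
      · exact h (Or.inl (by ext; rw [hiv, Fin.val_zero]))
      · exact h (Or.inr (by ext; rw [hiv, val1 hn]))
  rw [he, Set.ncard_diff (show ({0, 1} : Set (Fin n)) ⊆ Set.univ from fun z _ => Set.mem_univ z)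
      (Set.toFinite _),
    Set.ncard_univ, Nat.card_eq_fintype_card, Fintype.card_fin, Set.ncard_pair (zne1 hn)]

lemma TTs_ncard (hn : 4 ≤ n) : (TTs n).ncard = 2 * n - 4 := by
  rw [TTs_eq]
  have hdisj : Disjoint ((fun i => gPlus n i) '' {i : Fin n | 2 ≤ i.val})
      ((fun i => gMinus n i) '' {i : Fin n | 2 ≤ i.val}) := by
    rw [Set.disjoint_left]
    rintro g ⟨i, hi, rfl⟩ ⟨j, hj, hg⟩
    exact P_ne_M hn hi hj hg.symm
  have hP := Set.ncard_image_of_injOn (f := fun i => gPlus n i)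
    (s := {i : Fin n | 2 ≤ i.val}) (fun i hi j hj h => P_inj hn hi hj h)
  have hM := Set.ncard_image_of_injOn (f := fun i => gMinus n i)
    (s := {i : Fin n | 2 ≤ i.val}) (fun i hi j hj h => M_inj hn hi hj h)
  rw [Set.ncard_union_eq hdisj (Set.toFinite _) (Set.toFinite _), hP, hM, setge2_ncard hn]
  omega

lemma inter_smul_eq (p q : Equiv.Perm (Fin n)) :
    p • TTs n ∩ q • TTs n = p • (TTs n ∩ (p⁻¹ * q) • TTs n) := by
  rw [Set.smul_set_inter, smul_smul, mul_inv_cancel_left]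

lemma triple_smul_eq (p q r : Equiv.Perm (Fin n)) :
    p • TTs n ∩ q • TTs n ∩ r • TTs n =
      p • (TTs n ∩ (p⁻¹ * q) • TTs n ∩ (p⁻¹ * r) • TTs n) := by
  rw [Set.smul_set_inter, Set.smul_set_inter, smul_smul, smul_smul,
    mul_inv_cancel_left, mul_inv_cancel_left]

lemma ncard_inter_inv (w : Equiv.Perm (Fin n)) :
    (TTs n ∩ w⁻¹ • TTs n).ncard = (TTs n ∩ w • TTs n).ncard := by
  have he : TTs n ∩ w⁻¹ • TTs n = w⁻¹ • (w • TTs n ∩ TTs n) := by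
    rw [Set.smul_set_inter, inv_smul_smul]
  rw [he, Set.ncard_smul_set, Set.inter_comm]

lemma main_perm (hn : 4 ≤ n) (p q r : Equiv.Perm (Fin n))
    (hpq : p ≠ q) (hpr : p ≠ r) (hqr : q ≠ r)
    (npq : p⁻¹ * q ∉ TTs n) (npr : p⁻¹ * r ∉ TTs n) (nqr : q⁻¹ * r ∉ TTs n) :
    6 * n - 16 ≤ (p • TTs n ∪ q • TTs n ∪ r • TTs n).ncard := by
  set w1 := p⁻¹ * q with hw1d
  set w2 := p⁻¹ * r with hw2d
  set w3 := q⁻¹ * r with hw3d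
  have hw3 : w3 = w1⁻¹ * w2 := by rw [hw1d, hw2d, hw3d]; group
  have h11 : w1 ≠ 1 := fun h => hpq (inv_mul_eq_one.mp h)
  have h21 : w2 ≠ 1 := fun h => hpr (inv_mul_eq_one.mp h)
  have h31 : w3 ≠ 1 := fun h => hqr (inv_mul_eq_one.mp h)
  have h1T' : w1⁻¹ ∉ TTs n := fun h => npq (by simpa using TTs_inv hn h)
  have h2T' : w2⁻¹ ∉ TTs n := fun h => npr (by simpa using TTs_inv hn h)
  have h3T' : w3⁻¹ ∉ TTs n := fun h => nqr (by simpa using TTs_inv hn h)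
  set a := (TTs n ∩ w1 • TTs n).ncard with had
  set b := (TTs n ∩ w2 • TTs n).ncard with hbd
  set c := (TTs n ∩ w3 • TTs n).ncard with hcd
  set t3 := (TTs n ∩ w1 • TTs n ∩ w2 • TTs n).ncard with ht3d
  have ha2 : a ≤ 2 := card_le_two hn npq h11
  have hb2 : b ≤ 2 := card_le_two hn npr h21
  have hc2 : c ≤ 2 := card_le_two hn nqr h31
  have Hab : 2 ≤ a → 2 ≤ b → a + b + c ≤ 4 + t3 := by
    intro ha hb
    have hm := master hn npq h11 npr h21 (hw3 ▸ nqr) (hw3 ▸ h31) ha hb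
    rw [← hw3] at hm
    omega
  have Hac : 2 ≤ a → 2 ≤ c → a + b + c ≤ 4 + t3 := by
    intro ha hc
    have he23 : (w1⁻¹)⁻¹ * w3 = w2 := by rw [hw1d, hw2d, hw3d]; group
    have esym1 : (TTs n ∩ w1⁻¹ • TTs n).ncard = a := ncard_inter_inv w1
    have hm := master hn h1T' (inv_ne_one.mpr h11) nqr h31
      (he23 ▸ npr) (he23 ▸ h21) (esym1 ▸ ha) hc
    rw [he23] at hm
    have eq3 : TTs n ∩ w1⁻¹ • TTs n ∩ w3 • TTs n =
        w1⁻¹ • (w1 • TTs n ∩ TTs n ∩ w2 • TTs n) := by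
      rw [Set.smul_set_inter, Set.smul_set_inter, inv_smul_smul, smul_smul, ← hw3]
    rw [eq3, Set.ncard_smul_set, Set.inter_comm (w1 • TTs n)] at hm
    omega
  have Hbc : 2 ≤ b → 2 ≤ c → a + b + c ≤ 4 + t3 := by
    intro hb hc
    have he' : (w2⁻¹)⁻¹ * w3⁻¹ = w1 := by rw [hw1d, hw2d, hw3d]; group
    have heq : w2⁻¹ * w1 = w3⁻¹ := by rw [hw1d, hw2d, hw3d]; group
    have esym2 : (TTs n ∩ w2⁻¹ • TTs n).ncard = b := ncard_inter_inv w2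
    have esym3 : (TTs n ∩ w3⁻¹ • TTs n).ncard = c := ncard_inter_inv w3
    have hm := master hn h2T' (inv_ne_one.mpr h21) h3T' (inv_ne_one.mpr h31)
      (he' ▸ npq) (he' ▸ h11) (esym2 ▸ hb) (esym3 ▸ hc)
    rw [he'] at hm
    have eq3 : TTs n ∩ w2⁻¹ • TTs n ∩ w3⁻¹ • TTs n =
        w2⁻¹ • (w2 • TTs n ∩ TTs n ∩ w1 • TTs n) := by
      rw [Set.smul_set_inter, Set.smul_set_inter, inv_smul_smul, smul_smul, heq]
    rw [eq3, Set.ncard_smul_set, Set.inter_comm (w2 • TTs n), Set.inter_right_comm] at hm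
    omega
  have habc : a + b + c ≤ 4 + t3 := by
    rcases le_or_gt 2 a with ha | ha
    · rcases le_or_gt 2 b with hb | hb
      · exact Hab ha hb
      · rcases le_or_gt 2 c with hc | hc
        · exact Hac ha hc
        · omega
    · rcases le_or_gt 2 b with hb | hb
      · rcases le_or_gt 2 c with hc | hc
        · exact Hbc hb hc
        · omega
      · omega
  have e1 := Set.ncard_union_add_ncard_inter (p • TTs n) (q • TTs n)
    (Set.toFinite _) (Set.toFinite _)
  have e2 := Set.ncard_union_add_ncard_inter (p • TTs n ∪ q • TTs n) (r • TTs n)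
    (Set.toFinite _) (Set.toFinite _)
  have e3 : (p • TTs n ∪ q • TTs n) ∩ r • TTs n =
      (p • TTs n ∩ r • TTs n) ∪ (q • TTs n ∩ r • TTs n) :=
    Set.union_inter_distrib_right _ _ _
  have e4 := Set.ncard_union_add_ncard_inter (p • TTs n ∩ r • TTs n)
    (q • TTs n ∩ r • TTs n) (Set.toFinite _) (Set.toFinite _)
  have e5 : (p • TTs n ∩ r • TTs n) ∩ (q • TTs n ∩ r • TTs n) =
      p • TTs n ∩ q • TTs n ∩ r • TTs n := by
    ext z; simp only [Set.mem_inter_iff]; tauto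
  have s1 : (p • TTs n).ncard = 2 * n - 4 := by rw [Set.ncard_smul_set, TTs_ncard hn]
  have s2 : (q • TTs n).ncard = 2 * n - 4 := by rw [Set.ncard_smul_set, TTs_ncard hn]
  have s3 : (r • TTs n).ncard = 2 * n - 4 := by rw [Set.ncard_smul_set, TTs_ncard hn]
  have i1 : (p • TTs n ∩ q • TTs n).ncard = a := by
    rw [inter_smul_eq, Set.ncard_smul_set]
  have i2 : (p • TTs n ∩ r • TTs n).ncard = b := by
    rw [inter_smul_eq, Set.ncard_smul_set]
  have i3 : (q • TTs n ∩ r • TTs n).ncard = c := by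
    rw [inter_smul_eq, Set.ncard_smul_set]
  have i4 : (p • TTs n ∩ q • TTs n ∩ r • TTs n).ncard = t3 := by
    rw [triple_smul_eq, Set.ncard_smul_set]
  rw [e3] at e2
  rw [e5, i4, i2, i3] at e4
  rw [i1, s1, s2] at e1
  rw [s3] at e2
  omega

end count

section bridge

variable {t : Equiv.Perm (Fin n)}

lemma adj_iff (hn : 4 ≤ n) (u v : {p : Equiv.Perm (Fin n) // Equiv.Perm.sign p = 1}) :
    (AG n).Adj u v ↔ ∃ t ∈ TTs n, (v : Equiv.Perm (Fin n)) = ↑u * t := by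
  rw [AG, SimpleGraph.fromRel_adj]
  constructor
  · rintro ⟨hne, h | h⟩
    · obtain ⟨i, hi, h | h⟩ := h
      · exact ⟨gPlus n i, memP hi, h⟩
      · exact ⟨gMinus n i, memM hi, h⟩
    · obtain ⟨i, hi, h | h⟩ := h
      · exact ⟨(gPlus n i)⁻¹, TTs_inv hn (memP hi), by rw [h]; group⟩
      · exact ⟨(gMinus n i)⁻¹, TTs_inv hn (memM hi), by rw [h]; group⟩
  · rintro ⟨t, ht, hv⟩
    refine ⟨?_, Or.inl ?_⟩
    · intro huv
      rw [huv] at hv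
      exact TTs_ne_one hn ht (left_eq_mul.mp hv)
    · obtain ⟨i, hi, rfl | rfl⟩ := ht
      · exact ⟨i, hi, Or.inl hv⟩
      · exact ⟨i, hi, Or.inr hv⟩

lemma sign_TTs (hn : 4 ≤ n) (ht : t ∈ TTs n) : Equiv.Perm.sign t = 1 := by
  obtain ⟨i, hi, rfl | rfl⟩ := ht
  · rw [gPlus, Equiv.Perm.sign_mul, Equiv.Perm.sign_swap (Ne.symm (ine1 hn hi)),
      Equiv.Perm.sign_swap (zne1 hn)]
    norm_num
  · rw [gMinus, Equiv.Perm.sign_mul, Equiv.Perm.sign_swap (Ne.symm (ine0 hi)),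
      Equiv.Perm.sign_swap (zne1 hn)]
    norm_num

end bridge

end AGaux

theorem stmt_3 (n : ℕ) [NeZero n] (hn : 4 ≤ n)
    (S : Set {p : Equiv.Perm (Fin n) // Equiv.Perm.sign p = 1})
    (hcard : S.ncard = 3) (hind : IsIndep (AG n) S) :
    6 * n - 16 ≤ (nbhd (AG n) S).ncard := by
  obtain ⟨p, q, r, hpq, hpr, hqr, hS⟩ := Set.ncard_eq_three.mp hcard
  subst hS
  have hmemp : p ∈ ({p, q, r} : Set _) := by simp
  have hmemq : q ∈ ({p, q, r} : Set _) := by simp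
  have hmemr : r ∈ ({p, q, r} : Set _) := by simp
  have hpq' : (↑p : Equiv.Perm (Fin n)) ≠ ↑q := fun h => hpq (Subtype.ext h)
  have hpr' : (↑p : Equiv.Perm (Fin n)) ≠ ↑r := fun h => hpr (Subtype.ext h)
  have hqr' : (↑q : Equiv.Perm (Fin n)) ≠ ↑r := fun h => hqr (Subtype.ext h)
  have npq : (↑p : Equiv.Perm (Fin n))⁻¹ * ↑q ∉ TTs n := fun h =>
    hind p hmemp q hmemq ((adj_iff hn p q).mpr ⟨_, h, by group⟩)
  have npr : (↑p : Equiv.Perm (Fin n))⁻¹ * ↑r ∉ TTs n := fun h =>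
    hind p hmemp r hmemr ((adj_iff hn p r).mpr ⟨_, h, by group⟩)
  have nqr : (↑q : Equiv.Perm (Fin n))⁻¹ * ↑r ∉ TTs n := fun h =>
    hind q hmemq r hmemr ((adj_iff hn q r).mpr ⟨_, h, by group⟩)
  have himg : Subtype.val '' nbhd (AG n) {p, q, r} =
      (↑p : Equiv.Perm (Fin n)) • TTs n ∪ (↑q : Equiv.Perm (Fin n)) • TTs n ∪
        (↑r : Equiv.Perm (Fin n)) • TTs n := by
    ext z
    constructor
    · rintro ⟨v, ⟨hvS, u, huS, huv⟩, rfl⟩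
      obtain ⟨t, ht, hv⟩ := (adj_iff hn u v).mp huv
      have hz : (↑v : Equiv.Perm (Fin n)) ∈ (↑u : Equiv.Perm (Fin n)) • TTs n :=
        mem_smul_TTs hn ht hv.symm
      simp only [Set.mem_insert_iff, Set.mem_singleton_iff] at huS
      rcases huS with rfl | rfl | rfl
      · exact Or.inl (Or.inl hz)
      · exact Or.inl (Or.inr hz)
      · exact Or.inr hz
    · intro hz
      have hex : ∃ u : {g : Equiv.Perm (Fin n) // Equiv.Perm.sign g = 1},
          u ∈ ({p, q, r} : Set _) ∧ ∃ t ∈ TTs n, z = ↑u * t := by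
        rcases hz with (hz | hz) | hz
        · obtain ⟨t, ht, hzt⟩ := hz
          exact ⟨p, hmemp, t, ht, hzt.symm⟩
        · obtain ⟨t, ht, hzt⟩ := hz
          exact ⟨q, hmemq, t, ht, hzt.symm⟩
        · obtain ⟨t, ht, hzt⟩ := hz
          exact ⟨r, hmemr, t, ht, hzt.symm⟩
      obtain ⟨u, huS, t, ht, hzt⟩ := hex
      have hsign : Equiv.Perm.sign z = 1 := by
        rw [hzt, Equiv.Perm.sign_mul, u.2, sign_TTs hn ht, one_mul]
      refine ⟨⟨z, hsign⟩, ⟨?_, u, huS, (adj_iff hn u ⟨z, hsign⟩).mpr ⟨t, ht, hzt⟩⟩, rfl⟩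
      intro hmem
      have hxz : (z : Equiv.Perm (Fin n)) = z := rfl
      by_cases hxu : (⟨z, hsign⟩ : {g : Equiv.Perm (Fin n) // Equiv.Perm.sign g = 1}) = u
      · have : (↑u : Equiv.Perm (Fin n)) = ↑u * t := by
          rw [← hzt, ← hxu]
        exact TTs_ne_one hn ht (left_eq_mul.mp this)
      · have hadj : (AG n).Adj u ⟨z, hsign⟩ := (adj_iff hn u ⟨z, hsign⟩).mpr ⟨t, ht, hzt⟩
        exact hind u huS ⟨z, hsign⟩ hmem hadj
  have hninj := Set.ncard_image_of_injective (nbhd (AG n) {p, q, r})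
    (Subtype.val_injective)
  rw [himg] at hninj
  rw [← hninj]
  exact main_perm hn ↑p ↑q ↑r hpq' hpr' hqr' npq npr nqr
end

section
/- For n ≥ 4 and distinct i, j ∈ {3,...,n}, the set S = {e, (e·g_i^+)·g_j^+, (e·g_j^+)·g_i^+} (where e is the identity permutation) is an independent set in the alternating group graph AG_n whose neighborhood has size exactly 6n - 16. -/
/-!
Adjacency in `AG n` is `u⁻¹ * v ∈ R`, where `R` is the set of rotations `g_k^±`, and `R` is
closed under inverses; hence an independent set `P` has neighbourhood `P * R`. Here
`P = {1, A, B}` with `A = g_i^+ g_j^+ = (0 j)(1 i)` and `B = g_j^+ g_i^+ = (0 i)(1 j)`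
(0-based positions), both involutions. Every rotation sends `1 ↦ 0` or `0 ↦ 1`; reading off
these two values shows that `R ∩ A • R = {g_i^+, g_j^-}`, `R ∩ B • R = {g_j^+, g_i^-}`, and that
`A • R` and `B • R` are disjoint, since `B * A` swaps `0` and `1` and so sends no rotation into
`R`. Inclusion–exclusion then gives `|N(S)| = 3 (2n - 4) - 2 - 2 = 6n - 16`.
-/

open Equiv Pointwise

namespace AlternatingGroupGraph

lemma disjoint_mul_of_inv_mul_notMem {G : Type*} [Group G] {P T : Set G}
    (h : ∀ u ∈ P, ∀ v ∈ P, u⁻¹ * v ∉ T) : Disjoint (P * T) P := by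
  rw [Set.disjoint_left]
  rintro _ ⟨u, hu, t, ht, rfl⟩ hv
  exact h u hu _ hv (by rwa [inv_mul_cancel_left])

variable {n : ℕ}

lemma ncard_setOf_two_le_val : {k : Fin n | 2 ≤ k.val}.ncard = n - 2 := by
  have h : Fin.val '' {k : Fin n | 2 ≤ k.val} = Set.Ico 2 n := by
    ext m
    simp only [Set.mem_image, Set.mem_ofPred_eq, Set.mem_Ico]
    exact ⟨by rintro ⟨k, hk, rfl⟩; exact ⟨hk, k.isLt⟩, fun hm => ⟨⟨m, hm.2⟩, hm.1, rfl⟩⟩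
  rw [← Set.ncard_image_of_injective _ Fin.val_injective, h, Set.ncard_Ico_nat]

variable [NeZero n]

def rotations (n : ℕ) [NeZero n] : Set (Perm (Fin n)) :=
  {x | ∃ k : Fin n, 2 ≤ k.val ∧ (x = gPlus n k ∨ x = gMinus n k)}

@[simp] lemma gPlus_apply_zero (k : Fin n) : gPlus n k 0 = k := by simp [gPlus]

@[simp] lemma gMinus_apply_one (k : Fin n) : gMinus n k 1 = k := by simp [gMinus]

section TwoLeVal

variable {k : Fin n} (hk : 2 ≤ k.val)
include hk

lemma ne_zero_of_two_le_val : k ≠ 0 := by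
  rintro rfl; simp at hk

lemma ne_one_of_two_le_val : k ≠ 1 := by
  rintro rfl; rw [Fin.val_one'] at hk; have := Nat.mod_le 1 n; omega

lemma zero_ne_one_of_two_le_val : (0 : Fin n) ≠ 1 := by
  have : 1 < n := by have := k.isLt; omega
  exact Fin.ne_of_val_ne (by rw [Fin.val_zero, Fin.val_one', Nat.mod_eq_of_lt this]; omega)

lemma gPlus_apply_one : gPlus n k 1 = 0 := by
  simp [gPlus, swap_apply_of_ne_of_ne (zero_ne_one_of_two_le_val hk)
    (ne_zero_of_two_le_val hk).symm]

lemma gMinus_apply_zero : gMinus n k 0 = 1 := by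
  simp [gMinus, swap_apply_of_ne_of_ne (zero_ne_one_of_two_le_val hk).symm
    (ne_one_of_two_le_val hk).symm]

lemma gPlus_mul_gMinus : gPlus n k * gMinus n k = 1 := by
  have h := swap_mul_swap_mul_swap (ne_zero_of_two_le_val hk) (ne_one_of_two_le_val hk)
  rw [swap_comm k 0] at h
  rw [gPlus, gMinus, mul_assoc, ← mul_assoc (swap 0 1), h, swap_comm, swap_mul_self]

end TwoLeVal

variable {x c t : Perm (Fin n)}

lemma inv_mem_rotations (hx : x ∈ rotations n) : x⁻¹ ∈ rotations n := by
  obtain ⟨k, hk, rfl | rfl⟩ := hx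
  · exact ⟨k, hk, Or.inr (inv_eq_of_mul_eq_one_right (gPlus_mul_gMinus hk))⟩
  · exact ⟨k, hk, Or.inl (inv_eq_of_mul_eq_one_left (gPlus_mul_gMinus hk))⟩

lemma sign_eq_one_of_mem_rotations (hx : x ∈ rotations n) : Perm.sign x = 1 := by
  obtain ⟨k, hk, rfl | rfl⟩ := hx <;>
  simp [gPlus, gMinus, Perm.sign_swap (ne_one_of_two_le_val hk).symm,
    Perm.sign_swap (ne_zero_of_two_le_val hk).symm,
    Perm.sign_swap (zero_ne_one_of_two_le_val hk)]

lemma apply_one_eq_zero_or_apply_zero_eq_one (hx : x ∈ rotations n) : x 1 = 0 ∨ x 0 = 1 := by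
  obtain ⟨k, hk, rfl | rfl⟩ := hx
  · exact .inl (gPlus_apply_one hk)
  · exact .inr (gMinus_apply_zero hk)

lemma notMem_rotations_of_apply (h1 : x 1 ≠ 0) (h0 : x 0 ≠ 1) : x ∉ rotations n :=
  fun hx => (apply_one_eq_zero_or_apply_zero_eq_one hx).elim h1 h0

lemma apply_zero_ne_zero (hx : x ∈ rotations n) : x 0 ≠ 0 := by
  obtain ⟨k, hk, rfl | rfl⟩ := hx
  · simpa using ne_zero_of_two_le_val hk
  · simpa [gMinus_apply_zero hk] using (zero_ne_one_of_two_le_val hk).symm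

lemma apply_one_ne_one (hx : x ∈ rotations n) : x 1 ≠ 1 := by
  obtain ⟨k, hk, rfl | rfl⟩ := hx
  · simpa [gPlus_apply_one hk] using zero_ne_one_of_two_le_val hk
  · simpa using ne_one_of_two_le_val hk

lemma one_notMem_rotations : (1 : Perm (Fin n)) ∉ rotations n :=
  fun h => apply_one_ne_one h rfl

lemma notMem_rotations_of_swap (h0 : c 0 = 1) (h1 : c 1 = 0) : c ∉ rotations n := by
  rintro ⟨k, hk, rfl | rfl⟩
  · exact ne_one_of_two_le_val hk (by simpa using h0)
  · exact ne_zero_of_two_le_val hk (by simpa using h1)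

lemma mul_notMem_rotations (h0 : c 0 = 1) (h1 : c 1 = 0) (ht : t ∈ rotations n) :
    c * t ∉ rotations n := fun hct => by
  rcases apply_one_eq_zero_or_apply_zero_eq_one ht with ht1 | ht0
  · exact apply_one_ne_one hct (by simp [ht1, h0])
  · exact apply_zero_ne_zero hct (by simp [ht0, h1])

lemma gPlus_ne_gMinus {k l : Fin n} (hk : 2 ≤ k.val) (hl : 2 ≤ l.val) :
    gPlus n k ≠ gMinus n l :=
  fun h => ne_zero_of_two_le_val hl (by simpa [gPlus_apply_one hk] using congr($h 1).symm)

lemma ncard_rotations : (rotations n).ncard = 2 * n - 4 := by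
  have hunion : rotations n = gPlus n '' {k | 2 ≤ k.val} ∪ gMinus n '' {k | 2 ≤ k.val} := by
    ext x
    simp only [rotations, Set.mem_union, Set.mem_image, Set.mem_ofPred_eq]
    grind
  have hdisj : Disjoint (gPlus n '' {k | 2 ≤ k.val}) (gMinus n '' {k | 2 ≤ k.val}) := by
    rw [Set.disjoint_left]
    rintro _ ⟨k, hk, rfl⟩ ⟨l, hl, h⟩
    exact gPlus_ne_gMinus hk hl h.symm
  have hPlus : (gPlus n).Injective := fun k l h => by simpa using congr($h 0)
  have hMinus : (gMinus n).Injective := fun k l h => by simpa using congr($h 1)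
  rw [hunion, Set.ncard_union_eq hdisj, Set.ncard_image_of_injective _ hPlus,
    Set.ncard_image_of_injective _ hMinus, ncard_setOf_two_le_val]
  omega

lemma agRel_iff {p q : Perm (Fin n)} : agRel n p q ↔ p⁻¹ * q ∈ rotations n := by
  simp only [agRel, rotations, Set.mem_ofPred_eq, inv_mul_eq_iff_eq_mul]

lemma AG_adj {u v : {p : Perm (Fin n) // Perm.sign p = 1}} :
    (AG n).Adj u v ↔ u.1⁻¹ * v.1 ∈ rotations n := by
  rw [AG, SimpleGraph.fromRel_adj, agRel_iff, agRel_iff, ← inv_inv (v.1⁻¹ * u.1), mul_inv_rev,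
    inv_inv]
  refine ⟨fun ⟨_, h⟩ => h.elim id inv_mem_rotations, fun h => ⟨?_, .inl h⟩⟩
  rintro rfl
  exact one_notMem_rotations (by simpa using h)

lemma image_val_nbhd_AG (S : Set {p : Perm (Fin n) // Perm.sign p = 1}) :
    Subtype.val '' nbhd (AG n) S = (Subtype.val '' S * rotations n) \ Subtype.val '' S := by
  ext x
  simp only [nbhd, AG_adj, Set.mem_image, Set.mem_ofPred_eq, Set.mem_sdiff, Set.mem_mul]
  constructor
  · rintro ⟨v, ⟨hvS, u, huS, huv⟩, rfl⟩
    refine ⟨⟨u.1, ⟨u, huS, rfl⟩, _, huv, mul_inv_cancel_left _ _⟩, ?_⟩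
    rintro ⟨w, hwS, hw⟩
    exact hvS (Subtype.ext hw ▸ hwS)
  · rintro ⟨⟨_, ⟨u, huS, rfl⟩, t, ht, rfl⟩, hx⟩
    have hsign : Perm.sign (u.1 * t) = 1 := by
      rw [map_mul, u.2, sign_eq_one_of_mem_rotations ht, one_mul]
    refine ⟨⟨_, hsign⟩, ⟨fun h => hx ⟨_, h, rfl⟩, u, huS, by simpa using ht⟩, rfl⟩

def doubleSwap (n : ℕ) [NeZero n] (i j : Fin n) : Perm (Fin n) :=
  swap 0 j * swap 1 i

section DoubleSwap

variable {i j : Fin n}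

lemma swap_zero_comm_swap_one (hi : 2 ≤ i.val) (hj : 2 ≤ j.val) (hij : i ≠ j) :
    swap 0 j * swap 1 i = swap 1 i * swap 0 j := by
  refine (Perm.disjoint_swap_swap ?_).commute.eq
  simp [zero_ne_one_of_two_le_val hi, (ne_zero_of_two_le_val hi).symm,
    (ne_zero_of_two_le_val hj).symm, (ne_one_of_two_le_val hi).symm,
    ne_one_of_two_le_val hj, hij.symm]

lemma gPlus_mul_gPlus (hi : 2 ≤ i.val) (hj : 2 ≤ j.val) (hij : i ≠ j) :
    gPlus n i * gPlus n j = doubleSwap n i j := by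
  have h := swap_mul_swap_mul_swap (ne_one_of_two_le_val hj) (ne_zero_of_two_le_val hj)
  rw [swap_comm j, swap_comm 1 0] at h
  rw [gPlus, gPlus, mul_assoc, ← mul_assoc (swap 0 1), h,
    ← swap_zero_comm_swap_one hi hj hij, doubleSwap]

lemma doubleSwap_apply_zero (hi : 2 ≤ i.val) : doubleSwap n i j 0 = j := by
  rw [doubleSwap, Perm.mul_apply, swap_apply_of_ne_of_ne (zero_ne_one_of_two_le_val hi)
    (ne_zero_of_two_le_val hi).symm, swap_apply_left]

lemma doubleSwap_apply_one (hi : 2 ≤ i.val) (hij : i ≠ j) : doubleSwap n i j 1 = i := by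
  rw [doubleSwap, Perm.mul_apply, swap_apply_left,
    swap_apply_of_ne_of_ne (ne_zero_of_two_le_val hi) hij]

lemma doubleSwap_apply_left (hi : 2 ≤ i.val) (hj : 2 ≤ j.val) : doubleSwap n i j i = 1 := by
  rw [doubleSwap, Perm.mul_apply, swap_apply_right,
    swap_apply_of_ne_of_ne (zero_ne_one_of_two_le_val hi).symm (ne_one_of_two_le_val hj).symm]

lemma doubleSwap_apply_right (hj : 2 ≤ j.val) (hij : i ≠ j) : doubleSwap n i j j = 0 := by
  rw [doubleSwap, Perm.mul_apply, swap_apply_of_ne_of_ne (ne_one_of_two_le_val hj) hij.symm,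
    swap_apply_right]

lemma doubleSwap_mul_self (hi : 2 ≤ i.val) (hj : 2 ≤ j.val) (hij : i ≠ j) :
    doubleSwap n i j * doubleSwap n i j = 1 := by
  rw [doubleSwap, mul_assoc, ← mul_assoc (swap 1 i), ← swap_zero_comm_swap_one hi hj hij,
    mul_assoc, swap_mul_self_mul, swap_mul_self]

lemma doubleSwap_inv (hi : 2 ≤ i.val) (hj : 2 ≤ j.val) (hij : i ≠ j) :
    (doubleSwap n i j)⁻¹ = doubleSwap n i j :=
  inv_eq_of_mul_eq_one_right (doubleSwap_mul_self hi hj hij)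

lemma sign_doubleSwap (hi : 2 ≤ i.val) (hj : 2 ≤ j.val) : Perm.sign (doubleSwap n i j) = 1 := by
  rw [doubleSwap, map_mul, Perm.sign_swap (ne_zero_of_two_le_val hj).symm,
    Perm.sign_swap (ne_one_of_two_le_val hi).symm, Int.units_mul_self]

lemma doubleSwap_mul_gPlus : doubleSwap n i j * gPlus n i = gMinus n j := by
  simp only [doubleSwap, gPlus, gMinus, mul_assoc, swap_mul_self_mul]

lemma doubleSwap_mul_gMinus (hi : 2 ≤ i.val) (hj : 2 ≤ j.val) (hij : i ≠ j) :
    doubleSwap n i j * gMinus n j = gPlus n i := by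
  rw [← doubleSwap_mul_gPlus (i := i)]
  nth_rw 1 [← doubleSwap_inv hi hj hij]
  exact inv_mul_cancel_left _ _

lemma doubleSwap_notMem_rotations (hi : 2 ≤ i.val) (hj : 2 ≤ j.val) (hij : i ≠ j) :
    doubleSwap n i j ∉ rotations n :=
  notMem_rotations_of_apply
    (by rw [doubleSwap_apply_one hi hij]; exact ne_zero_of_two_le_val hi)
    (by rw [doubleSwap_apply_zero hi]; exact ne_one_of_two_le_val hj)

lemma doubleSwap_mul_doubleSwap_apply_zero (hi : 2 ≤ i.val) (hj : 2 ≤ j.val) :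
    (doubleSwap n i j * doubleSwap n j i) 0 = 1 := by
  rw [Perm.mul_apply, doubleSwap_apply_zero hj, doubleSwap_apply_left hi hj]

lemma doubleSwap_mul_doubleSwap_apply_one (hj : 2 ≤ j.val) (hij : i ≠ j) :
    (doubleSwap n i j * doubleSwap n j i) 1 = 0 := by
  rw [Perm.mul_apply, doubleSwap_apply_one hj hij.symm, doubleSwap_apply_right hj hij]

lemma rotations_inter_doubleSwap_smul (hi : 2 ≤ i.val) (hj : 2 ≤ j.val) (hij : i ≠ j) :
    rotations n ∩ doubleSwap n i j • rotations n = {gPlus n i, gMinus n j} := by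
  ext x
  constructor
  · rintro ⟨hx, t, ⟨k, hk, rfl | rfl⟩, rfl⟩ <;> simp only [smul_eq_mul] at hx ⊢
    · have h0 : (doubleSwap n i j * gPlus n k) 0 = 1 :=
        (apply_one_eq_zero_or_apply_zero_eq_one hx).resolve_left <| by
          rw [Perm.mul_apply, gPlus_apply_one hk, doubleSwap_apply_zero hi]
          exact ne_zero_of_two_le_val hj
      rw [Perm.mul_apply, gPlus_apply_zero, ← doubleSwap_apply_left hi hj,
        (doubleSwap n i j).injective.eq_iff] at h0
      rw [h0]
      exact .inr doubleSwap_mul_gPlus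
    · have h1 : (doubleSwap n i j * gMinus n k) 1 = 0 :=
        (apply_one_eq_zero_or_apply_zero_eq_one hx).resolve_right <| by
          rw [Perm.mul_apply, gMinus_apply_zero hk, doubleSwap_apply_one hi hij]
          exact ne_one_of_two_le_val hi
      rw [Perm.mul_apply, gMinus_apply_one, ← doubleSwap_apply_right hj hij,
        (doubleSwap n i j).injective.eq_iff] at h1
      rw [h1]
      exact .inl (doubleSwap_mul_gMinus hi hj hij)
  · rintro (rfl | rfl)
    · exact ⟨⟨i, hi, .inl rfl⟩, gMinus n j, ⟨j, hj, .inr rfl⟩, doubleSwap_mul_gMinus hi hj hij⟩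
    · exact ⟨⟨j, hj, .inr rfl⟩, gPlus n i, ⟨i, hi, .inl rfl⟩, doubleSwap_mul_gPlus⟩

lemma disjoint_doubleSwap_smul_rotations (hi : 2 ≤ i.val) (hj : 2 ≤ j.val) (hij : i ≠ j) :
    Disjoint (doubleSwap n i j • rotations n) (doubleSwap n j i • rotations n) := by
  rw [Set.disjoint_left]
  rintro _ ⟨t, ht, rfl⟩ ⟨t', ht', h⟩
  simp only [smul_eq_mul] at h
  have ht'_eq := eq_inv_mul_of_mul_eq h
  rw [doubleSwap_inv hj hi hij.symm, ← mul_assoc] at ht'_eq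
  exact mul_notMem_rotations (doubleSwap_mul_doubleSwap_apply_zero hj hi)
    (doubleSwap_mul_doubleSwap_apply_one hi hij.symm) ht (ht'_eq ▸ ht')

lemma inv_mul_notMem_rotations (hi : 2 ≤ i.val) (hj : 2 ≤ j.val) (hij : i ≠ j) :
    ∀ u ∈ ({1, doubleSwap n i j, doubleSwap n j i} : Set (Perm (Fin n))),
    ∀ v ∈ ({1, doubleSwap n i j, doubleSwap n j i} : Set (Perm (Fin n))),
    u⁻¹ * v ∉ rotations n := by
  have hA := doubleSwap_notMem_rotations hi hj hij
  have hB := doubleSwap_notMem_rotations hj hi hij.symm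
  have hAB := notMem_rotations_of_swap (doubleSwap_mul_doubleSwap_apply_zero hi hj)
    (doubleSwap_mul_doubleSwap_apply_one hj hij)
  have hBA := notMem_rotations_of_swap (doubleSwap_mul_doubleSwap_apply_zero hj hi)
    (doubleSwap_mul_doubleSwap_apply_one hi hij.symm)
  simp only [Set.mem_insert_iff, Set.mem_singleton_iff]
  rintro u (rfl | rfl | rfl) v (rfl | rfl | rfl) <;>
    simp [doubleSwap_inv hi hj hij, doubleSwap_inv hj hi hij.symm, doubleSwap_mul_self hi hj hij,
      doubleSwap_mul_self hj hi hij.symm, one_notMem_rotations, *]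

lemma ncard_mul_rotations (hi : 2 ≤ i.val) (hj : 2 ≤ j.val) (hij : i ≠ j) :
    (({1, doubleSwap n i j, doubleSwap n j i} : Set (Perm (Fin n))) * rotations n).ncard =
      6 * n - 16 := by
  have hunion : ({1, doubleSwap n i j, doubleSwap n j i} : Set (Perm (Fin n))) * rotations n =
      rotations n ∪ doubleSwap n i j • rotations n ∪ doubleSwap n j i • rotations n := by
    rw [Set.insert_eq, Set.insert_eq, Set.union_mul, Set.union_mul, Set.singleton_mul,
      Set.singleton_mul, Set.singleton_mul, ← Set.union_assoc]
    simp only [← smul_eq_mul, Set.image_smul, one_smul, Set.image_id']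
  have hinter : (rotations n ∪ doubleSwap n i j • rotations n) ∩ doubleSwap n j i • rotations n =
      rotations n ∩ doubleSwap n j i • rotations n := by
    rw [Set.union_inter_distrib_right,
      (disjoint_doubleSwap_smul_rotations hi hj hij).inter_eq, Set.union_empty]
  have h1 := Set.ncard_union_add_ncard_inter (rotations n) (doubleSwap n i j • rotations n)
  have h2 := Set.ncard_union_add_ncard_inter
    (rotations n ∪ doubleSwap n i j • rotations n) (doubleSwap n j i • rotations n)
  rw [rotations_inter_doubleSwap_smul hi hj hij, Set.ncard_pair (gPlus_ne_gMinus hi hj)] at h1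
  rw [hinter, rotations_inter_doubleSwap_smul hj hi hij.symm,
    Set.ncard_pair (gPlus_ne_gMinus hj hi)] at h2
  rw [hunion]
  simp only [Set.ncard_smul_set, ncard_rotations] at h1 h2
  omega

end DoubleSwap

end AlternatingGroupGraph

open AlternatingGroupGraph

theorem stmt_5_general (n : ℕ) [NeZero n] (i j : Fin n)
    (hi : 2 ≤ i.val) (hj : 2 ≤ j.val) (hij : i ≠ j)
    (S : Set {p : Equiv.Perm (Fin n) // Equiv.Perm.sign p = 1})
    (hS : S = {v | v.1 = 1 ∨ v.1 = gPlus n i * gPlus n j ∨ v.1 = gPlus n j * gPlus n i}) :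
    IsIndep (AG n) S ∧ (nbhd (AG n) S).ncard = 6 * n - 16 := by
  rw [gPlus_mul_gPlus hi hj hij, gPlus_mul_gPlus hj hi hij.symm] at hS
  have hval : Subtype.val '' S = {1, doubleSwap n i j, doubleSwap n j i} := by
    rw [hS]
    refine Set.image_preimage_eq_of_subset (s := {1, doubleSwap n i j, doubleSwap n j i}) ?_
    rintro _ (rfl | rfl | rfl)
    exacts [⟨⟨1, Perm.sign_one⟩, rfl⟩, ⟨⟨_, sign_doubleSwap hi hj⟩, rfl⟩,
      ⟨⟨_, sign_doubleSwap hj hi⟩, rfl⟩]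
  have hP := inv_mul_notMem_rotations hi hj hij
  rw [← hval] at hP
  refine ⟨fun u hu v hv => ?_, ?_⟩
  · rw [AG_adj]
    exact hP _ ⟨u, hu, rfl⟩ _ ⟨v, hv, rfl⟩
  · rw [← Set.ncard_image_of_injective _ Subtype.val_injective, image_val_nbhd_AG,
      (disjoint_mul_of_inv_mul_notMem hP).sdiff_eq_left, hval, ncard_mul_rotations hi hj hij]

theorem stmt_5 (n : ℕ) [NeZero n] (hn : 4 ≤ n) (i j : Fin n)
    (hi : 2 ≤ i.val) (hj : 2 ≤ j.val) (hij : i ≠ j)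
    (S : Set {p : Equiv.Perm (Fin n) // Equiv.Perm.sign p = 1})
    (hS : S = {v | v.1 = 1 ∨ v.1 = gPlus n i * gPlus n j ∨ v.1 = gPlus n j * gPlus n i}) :
    IsIndep (AG n) S ∧ (nbhd (AG n) S).ncard = 6 * n - 16 :=
  stmt_5_general n i j hi hj hij S hS
end

section
/- In the split-star graph S_n^2 (n ≥ 4), any two vertices x, y at distance 1 have at most 1 common neighbor, any two vertices at distance 2 have at most 2 common neighbors, and vertices at distance at least 3 have no common neighbors. -/
/-!
`S_n^2` is the Cayley graph of its generating set `S`, so the common neighbours of `x` and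
`y` are `x • (S ∩ z • S)` with `z = x⁻¹ * y`, i.e. they correspond to factorisations of `z`
as a product of two generators. Evaluating such products at the positions `0` and `1` shows:
a product `s * t` of two generators is itself a generator only when it equals `s⁻¹`, which gives
at most one common neighbour of adjacent vertices; and for `z ≠ 1` the left factor is one of two
candidates read off from `z 0` and `z 1`. At distance at least `3` there is no common neighbour,
since it would give a path of length `2`.
-/

open Equiv SimpleGraph
open scoped Pointwise

theorem Set.ncard_pair_le {α : Type*} (a b : α) : ({a, b} : Set α).ncard ≤ 2 :=
  (Set.ncard_insert_le a {b}).trans (by rw [Set.ncard_singleton])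

namespace SimpleGraph

variable {G : Type*} [Group G] {S : Set G}

theorem mulCayley_adj_iff_inv_mul_mem (hS : S⁻¹ = S) (h1 : 1 ∉ S) (u v : G) :
    (mulCayley S).Adj u v ↔ u⁻¹ * v ∈ S := by
  have hsymm : v⁻¹ * u ∈ S ↔ u⁻¹ * v ∈ S := by
    rw [← Set.inv_mem_inv, hS, mul_inv_rev, inv_inv]
  rw [mulCayley_adj, hsymm, or_self, and_iff_right_iff_imp]
  rintro h rfl
  exact h1 (by simpa using h)

theorem commonNeighbors_mulCayley (hS : S⁻¹ = S) (h1 : 1 ∉ S) (x y : G) :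
    (mulCayley S).commonNeighbors x y = x • (S ∩ (x⁻¹ * y) • S) := by
  ext v
  simp [mem_commonNeighbors, mulCayley_adj_iff_inv_mul_mem hS h1,
    Set.mem_smul_set_iff_inv_smul_mem, mul_assoc]

end SimpleGraph

theorem Fin.two_le_val_iff {n : ℕ} [NeZero n] {i : Fin n} :
    2 ≤ i.val ↔ i ≠ 0 ∧ i ≠ 1 := by
  obtain _ | _ | n := n
  · exact absurd rfl (NeZero.ne 0)
  · simp [Fin.eq_zero i]
  · rw [Ne, Ne, Fin.ext_iff, Fin.ext_iff, Fin.val_zero, Fin.val_one]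
    omega

namespace SplitStar

variable {n : ℕ} [NeZero n]

section Generators

variable {i x : Fin n}

@[simp] lemma gPlus_apply_zero (i : Fin n) : gPlus n i 0 = i := by
  simp [gPlus]

@[simp] lemma gPlus_apply_one (h01 : (0 : Fin n) ≠ 1) (hi0 : i ≠ 0) : gPlus n i 1 = 0 := by
  simp [gPlus, swap_apply_of_ne_of_ne h01 hi0.symm]

@[simp] lemma gPlus_apply_self (hi0 : i ≠ 0) (hi1 : i ≠ 1) : gPlus n i i = 1 := by
  simp [gPlus, swap_apply_of_ne_of_ne hi0 hi1]

@[simp] lemma gPlus_apply_of_ne (hx0 : x ≠ 0) (hx1 : x ≠ 1) (hxi : x ≠ i) :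
    gPlus n i x = x := by
  simp [gPlus, swap_apply_of_ne_of_ne hx0 hx1, swap_apply_of_ne_of_ne hx1 hxi]

@[simp] lemma gMinus_apply_zero (h01 : (0 : Fin n) ≠ 1) (hi1 : i ≠ 1) : gMinus n i 0 = 1 := by
  simp [gMinus, swap_apply_of_ne_of_ne h01.symm hi1.symm]

@[simp] lemma gMinus_apply_one (i : Fin n) : gMinus n i 1 = i := by
  simp [gMinus]

@[simp] lemma gMinus_apply_self (hi0 : i ≠ 0) (hi1 : i ≠ 1) : gMinus n i i = 0 := by
  simp [gMinus, swap_apply_of_ne_of_ne hi0 hi1]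

@[simp] lemma gMinus_apply_of_ne (hx0 : x ≠ 0) (hx1 : x ≠ 1) (hxi : x ≠ i) :
    gMinus n i x = x := by
  simp [gMinus, swap_apply_of_ne_of_ne hx0 hx1, swap_apply_of_ne_of_ne hx0 hxi]

variable (h01 : (0 : Fin n) ≠ 1) (hi0 : i ≠ 0) (hi1 : i ≠ 1)
include h01 hi0 hi1

@[simp] lemma gPlus_mul_gMinus : gPlus n i * gMinus n i = 1 := by
  ext x
  rcases eq_or_ne x 0 with rfl | hx0; · simp [*]
  rcases eq_or_ne x 1 with rfl | hx1; · simp [*]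
  rcases eq_or_ne x i with rfl | hxi <;> simp [*]

@[simp] lemma gMinus_mul_gPlus : gMinus n i * gPlus n i = 1 :=
  mul_eq_one_comm.mp (gPlus_mul_gMinus h01 hi0 hi1)

@[simp] lemma gPlus_inv : (gPlus n i)⁻¹ = gMinus n i :=
  inv_eq_of_mul_eq_one_right (gPlus_mul_gMinus h01 hi0 hi1)

@[simp] lemma gMinus_inv : (gMinus n i)⁻¹ = gPlus n i :=
  inv_eq_of_mul_eq_one_left (gPlus_mul_gMinus h01 hi0 hi1)

@[simp] lemma gPlus_mul_self : gPlus n i * gPlus n i = gMinus n i := by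
  ext x
  rcases eq_or_ne x 0 with rfl | hx0; · simp [*]
  rcases eq_or_ne x 1 with rfl | hx1; · simp [*]
  rcases eq_or_ne x i with rfl | hxi <;> simp [*]

@[simp] lemma gMinus_mul_self : gMinus n i * gMinus n i = gPlus n i := by
  rw [← gPlus_inv h01 hi0 hi1, ← mul_inv_rev, gPlus_mul_self h01 hi0 hi1,
    gMinus_inv h01 hi0 hi1]

end Generators

def gens (n : ℕ) [NeZero n] : Set (Perm (Fin n)) :=
  {w | w = swap 0 1 ∨ ∃ i : Fin n, i ≠ 0 ∧ i ≠ 1 ∧ (w = gPlus n i ∨ w = gMinus n i)}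

theorem splitStar_eq_mulCayley : SplitStar n = mulCayley (gens n) := by
  unfold SplitStar mulCayley
  congr! 3 with p q
  simp only [agRel, gens, Fin.two_le_val_iff, Set.mem_ofPred_eq]
  aesop

-- For a product `z = s * t` of two generators, `s` is one of these two, read off from where
-- `z` and `z⁻¹` send `0` and `1`.
def leftFactorCandidates (z : Perm (Fin n)) : Set (Perm (Fin n)) :=
  if z 1 = 1 then {swap 0 1, gMinus n (z⁻¹ 0)}
  else if z 0 = 0 then {swap 0 1, gPlus n (z⁻¹ 1)}
  else {gPlus n (z 1), gMinus n (z 0)}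

lemma ncard_leftFactorCandidates_le (z : Perm (Fin n)) : (leftFactorCandidates z).ncard ≤ 2 := by
  unfold leftFactorCandidates
  split_ifs <;> exact Set.ncard_pair_le _ _

section Gens

variable (h01 : (0 : Fin n) ≠ 1)
include h01

lemma apply_zero_one_of_mem_gens {w : Perm (Fin n)} (hw : w ∈ gens n) :
    w 0 ≠ 0 ∧ w 1 ≠ 1 ∧ (w 1 = 0 ∨ w 0 = 1) := by
  rcases hw with rfl | ⟨i, hi0, hi1, rfl | rfl⟩ <;> simp [*, h01.symm]

lemma one_notMem_gens : 1 ∉ gens n :=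
  fun h => (apply_zero_one_of_mem_gens h01 h).1 rfl

lemma inv_mem_gens {w : Perm (Fin n)} (hw : w ∈ gens n) : w⁻¹ ∈ gens n := by
  rcases hw with rfl | ⟨i, hi0, hi1, rfl | rfl⟩
  · simp [gens]
  · exact .inr ⟨i, hi0, hi1, .inr (gPlus_inv h01 hi0 hi1)⟩
  · exact .inr ⟨i, hi0, hi1, .inl (gMinus_inv h01 hi0 hi1)⟩

lemma gens_inv : (gens n)⁻¹ = gens n :=
  Set.ext fun _ => ⟨fun h => by simpa using inv_mem_gens h01 h, inv_mem_gens h01⟩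

theorem adj_iff {p q : Perm (Fin n)} : (SplitStar n).Adj p q ↔ p⁻¹ * q ∈ gens n := by
  rw [splitStar_eq_mulCayley,
    mulCayley_adj_iff_inv_mul_mem (gens_inv h01) (one_notMem_gens h01)]

theorem ncard_commonNeighbors (x y : Perm (Fin n)) :
    ((SplitStar n).commonNeighbors x y).ncard = (gens n ∩ (x⁻¹ * y) • gens n).ncard := by
  rw [splitStar_eq_mulCayley, commonNeighbors_mulCayley (gens_inv h01) (one_notMem_gens h01),
    Set.ncard_smul_set]

-- The only triangles of `S_n^2` are the cosets of the subgroups generated by `g_i^±`.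
lemma mul_eq_inv_of_mul_mem_gens {s t : Perm (Fin n)}
    (hs : s ∈ gens n) (ht : t ∈ gens n) (hst : s * t ∈ gens n) : s * t = s⁻¹ := by
  obtain ⟨h0, h1, h10⟩ := apply_zero_one_of_mem_gens h01 hst
  rcases hs with rfl | ⟨i, hi0, hi1, hs⟩ <;> rcases ht with rfl | ⟨j, hj0, hj1, ht⟩
  · simp at h0
  · rcases ht with rfl | rfl <;> simp [*] at h0 h1
  · rcases hs with rfl | rfl <;> simp [*] at h0 h1
  · obtain rfl | hij := eq_or_ne i j
    · rcases hs with rfl | rfl <;> rcases ht with rfl | rfl <;> simp_all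
    · have hji := hij.symm
      rcases hs with rfl | rfl <;> rcases ht with rfl | rfl <;> simp [*] at h0 h1 h10

lemma mem_leftFactorCandidates {s t : Perm (Fin n)}
    (hs : s ∈ gens n) (ht : t ∈ gens n) (hst : s * t ≠ 1) :
    s ∈ leftFactorCandidates (s * t) := by
  rcases hs with rfl | ⟨i, hi0, hi1, hs⟩ <;> rcases ht with rfl | ⟨j, hj0, hj1, ht⟩
  · simp at hst
  · rcases ht with rfl | rfl <;> simp [leftFactorCandidates, swap_apply_of_ne_of_ne, *]
  · rcases hs with rfl | rfl <;> simp [leftFactorCandidates, swap_apply_of_ne_of_ne, *]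
  · obtain rfl | hij := eq_or_ne i j
    · rcases hs with rfl | rfl <;> rcases ht with rfl | rfl <;> simp_all [leftFactorCandidates]
    · have hji := hij.symm
      rcases hs with rfl | rfl <;> rcases ht with rfl | rfl <;> simp [leftFactorCandidates, *]

lemma gens_inter_smul_subset_singleton_inv {z : Perm (Fin n)}
    (hz : z ∈ gens n) : gens n ∩ z • gens n ⊆ {z⁻¹} := by
  rintro _ ⟨hs, t, ht, rfl⟩
  exact mul_eq_inv_of_mul_mem_gens h01 hz ht hs

lemma gens_inter_smul_subset_leftFactorCandidates {z : Perm (Fin n)}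
    (hz : z ≠ 1) : gens n ∩ z • gens n ⊆ leftFactorCandidates z := by
  rintro _ ⟨hs, t, ht, rfl⟩
  simpa using mem_leftFactorCandidates h01 hs (inv_mem_gens h01 ht) (by simpa using hz)

end Gens

end SplitStar

theorem stmt_12 (n : ℕ) [NeZero n] (hn : 4 ≤ n) (x y : Equiv.Perm (Fin n)) :
    ((SplitStar n).dist x y = 1 →
      {v | (SplitStar n).Adj x v ∧ (SplitStar n).Adj y v}.ncard ≤ 1) ∧
    ((SplitStar n).dist x y = 2 →
      {v | (SplitStar n).Adj x v ∧ (SplitStar n).Adj y v}.ncard ≤ 2) ∧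
    (3 ≤ (SplitStar n).dist x y →
      {v | (SplitStar n).Adj x v ∧ (SplitStar n).Adj y v}.ncard = 0) := by
  have h01 : (0 : Fin n) ≠ 1 := by
    rw [Ne, Fin.ext_iff, Fin.val_zero, Fin.val_one', Nat.mod_eq_of_lt (by omega)]
    omega
  have hcommon : {v | (SplitStar n).Adj x v ∧ (SplitStar n).Adj y v}.ncard = _ :=
    SplitStar.ncard_commonNeighbors h01 x y
  refine ⟨fun h => ?_, fun h => ?_, fun h => ?_⟩
  · have hz : x⁻¹ * y ∈ SplitStar.gens n := by
      rwa [dist_eq_one_iff_adj, SplitStar.adj_iff h01] at h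
    rw [hcommon]
    exact (Set.ncard_le_ncard (SplitStar.gens_inter_smul_subset_singleton_inv h01 hz)).trans
      (Set.ncard_singleton _).le
  · have hz : x⁻¹ * y ≠ 1 := by
      rintro hxy
      rw [inv_mul_eq_one.mp hxy, SimpleGraph.dist_self] at h
      omega
    rw [hcommon]
    exact (Set.ncard_le_ncard (SplitStar.gens_inter_smul_subset_leftFactorCandidates h01 hz)).trans
      (SplitStar.ncard_leftFactorCandidates_le _)
  · rw [Set.ncard_eq_zero, Set.eq_empty_iff_forall_notMem]
    rintro v ⟨hxv, hyv⟩
    have := dist_le (.cons hxv (.cons hyv.symm .nil))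
    simp only [Walk.length_cons, Walk.length_nil] at this
    omega
end

section
/- Let S be an independent set of size 3 in the split-star S_n^2 with n ≥ 4. Then |N(S)| ≥ 6n - 14. -/
namespace SS14
open Equiv Equiv.Perm Set

variable {n : ℕ} [NeZero n]

lemma one_val (hn : 4 ≤ n) : (1 : Fin n).val = 1 := by
  rw [Fin.val_one', Nat.mod_eq_of_lt (by omega)]
lemma zero_ne_one (hn : 4 ≤ n) : (0 : Fin n) ≠ 1 := by
  intro h; have := congrArg Fin.val h; rw [one_val hn] at this; simp at this
lemma ne0 {i : Fin n} (hi : 2 ≤ i.val) : i ≠ 0 := by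
  intro h; rw [h] at hi; simp at hi
lemma ne1 (hn : 4 ≤ n) {i : Fin n} (hi : 2 ≤ i.val) : i ≠ 1 := by
  intro h; rw [h, one_val hn] at hi; omega
lemma gPlus_zero {i : Fin n} : gPlus n i 0 = i := by
  simp [gPlus, Equiv.Perm.mul_apply, Equiv.swap_apply_left]
lemma gPlus_one (hn : 4 ≤ n) {i : Fin n} (hi : 2 ≤ i.val) : gPlus n i 1 = 0 := by
  simp [gPlus, Equiv.Perm.mul_apply,
    Equiv.swap_apply_of_ne_of_ne (zero_ne_one hn) (Ne.symm (ne0 hi))]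
lemma gPlus_self (hn : 4 ≤ n) {i : Fin n} (hi : 2 ≤ i.val) : gPlus n i i = 1 := by
  simp [gPlus, Equiv.Perm.mul_apply,
    Equiv.swap_apply_of_ne_of_ne (ne0 hi) (ne1 hn hi)]
lemma gPlus_ne {i x : Fin n} (h0 : x ≠ 0) (h1 : x ≠ 1) (hx : x ≠ i) : gPlus n i x = x := by
  simp [gPlus, Equiv.Perm.mul_apply, Equiv.swap_apply_of_ne_of_ne h0 h1,
    Equiv.swap_apply_of_ne_of_ne h1 hx]
lemma gMinus_zero (hn : 4 ≤ n) {i : Fin n} (hi : 2 ≤ i.val) : gMinus n i 0 = 1 := by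
  simp [gMinus, Equiv.Perm.mul_apply,
    Equiv.swap_apply_of_ne_of_ne (Ne.symm (zero_ne_one hn)) (Ne.symm (ne1 hn hi))]
lemma gMinus_one {i : Fin n} : gMinus n i 1 = i := by
  simp [gMinus, Equiv.Perm.mul_apply]
lemma gMinus_self (hn : 4 ≤ n) {i : Fin n} (hi : 2 ≤ i.val) : gMinus n i i = 0 := by
  simp [gMinus, Equiv.Perm.mul_apply,
    Equiv.swap_apply_of_ne_of_ne (ne0 hi) (ne1 hn hi)]
lemma gMinus_ne {i x : Fin n} (h0 : x ≠ 0) (h1 : x ≠ 1) (hx : x ≠ i) : gMinus n i x = x := by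
  simp [gMinus, Equiv.Perm.mul_apply, Equiv.swap_apply_of_ne_of_ne h0 h1,
    Equiv.swap_apply_of_ne_of_ne h0 hx]

lemma L_ps {i : Fin n} : gPlus n i * Equiv.swap 0 1 = Equiv.swap 1 i := by
  rw [gPlus, mul_assoc, Equiv.swap_mul_self, mul_one]
lemma L_ms {i : Fin n} : gMinus n i * Equiv.swap 0 1 = Equiv.swap 0 i := by
  rw [gMinus, mul_assoc, Equiv.swap_mul_self, mul_one]

lemma L_sm (hn : 4 ≤ n) {i : Fin n} (hi : 2 ≤ i.val) :
    Equiv.swap 0 1 * gMinus n i = Equiv.swap 1 i := by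
  have h01 := zero_ne_one hn
  have h10 := h01.symm
  have hi0 := ne0 hi
  have h0i := hi0.symm
  have hi1 := ne1 hn hi
  have h1i := hi1.symm
  apply Equiv.ext; intro x
  rcases eq_or_ne x 0 with rfl | h0 <;>
  [skip; rcases eq_or_ne x 1 with rfl | h1] <;>
  [skip; skip; rcases eq_or_ne x i with rfl | hxi] <;>
  simp_all [Perm.mul_apply, gMinus_zero hn, gMinus_one, gMinus_self hn, gMinus_ne,
    Equiv.swap_apply_def]

lemma L_sp (hn : 4 ≤ n) {i : Fin n} (hi : 2 ≤ i.val) :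
    Equiv.swap 0 1 * gPlus n i = Equiv.swap 0 i := by
  have h01 := zero_ne_one hn
  have h10 := h01.symm
  have hi0 := ne0 hi
  have h0i := hi0.symm
  have hi1 := ne1 hn hi
  have h1i := hi1.symm
  apply Equiv.ext; intro x
  rcases eq_or_ne x 0 with rfl | h0 <;>
  [skip; rcases eq_or_ne x 1 with rfl | h1] <;>
  [skip; skip; rcases eq_or_ne x i with rfl | hxi] <;>
  simp_all [Perm.mul_apply, gPlus_zero, gPlus_one hn, gPlus_self hn, gPlus_ne,
    Equiv.swap_apply_def]

lemma pm_one (hn : 4 ≤ n) {i : Fin n} (hi : 2 ≤ i.val) : gPlus n i * gMinus n i = 1 := by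
  have h01 := zero_ne_one hn
  have h10 := h01.symm
  have hi0 := ne0 hi
  have h0i := hi0.symm
  have hi1 := ne1 hn hi
  have h1i := hi1.symm
  apply Equiv.ext; intro x
  rcases eq_or_ne x 0 with rfl | h0 <;>
  [skip; rcases eq_or_ne x 1 with rfl | h1] <;>
  [skip; skip; rcases eq_or_ne x i with rfl | hxi] <;>
  simp_all [Perm.mul_apply, gPlus_zero, gPlus_one hn, gPlus_self hn, gPlus_ne,
    gMinus_zero hn, gMinus_one, gMinus_self hn, gMinus_ne]

lemma gPlus_inv (hn : 4 ≤ n) {i : Fin n} (hi : 2 ≤ i.val) : (gPlus n i)⁻¹ = gMinus n i :=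
  inv_eq_of_mul_eq_one_right (pm_one hn hi)
lemma gMinus_inv (hn : 4 ≤ n) {i : Fin n} (hi : 2 ≤ i.val) : (gMinus n i)⁻¹ = gPlus n i := by
  rw [← gPlus_inv hn hi, inv_inv]
lemma mp_one (hn : 4 ≤ n) {i : Fin n} (hi : 2 ≤ i.val) : gMinus n i * gPlus n i = 1 := by
  rw [← gPlus_inv hn hi, inv_mul_cancel]

lemma pp_eq_m (hn : 4 ≤ n) {i : Fin n} (hi : 2 ≤ i.val) :
    gPlus n i * gPlus n i = gMinus n i := by
  have h01 := zero_ne_one hn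
  have h10 := h01.symm
  have hi0 := ne0 hi
  have h0i := hi0.symm
  have hi1 := ne1 hn hi
  have h1i := hi1.symm
  apply Equiv.ext; intro x
  rcases eq_or_ne x 0 with rfl | h0 <;>
  [skip; rcases eq_or_ne x 1 with rfl | h1] <;>
  [skip; skip; rcases eq_or_ne x i with rfl | hxi] <;>
  simp_all [Perm.mul_apply, gPlus_zero, gPlus_one hn, gPlus_self hn, gPlus_ne,
    gMinus_zero hn, gMinus_one, gMinus_self hn, gMinus_ne]

lemma mm_eq_p (hn : 4 ≤ n) {i : Fin n} (hi : 2 ≤ i.val) :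
    gMinus n i * gMinus n i = gPlus n i := by
  have : gMinus n i * gMinus n i = (gPlus n i * gPlus n i)⁻¹ := by
    rw [mul_inv_rev, gPlus_inv hn hi]
  rw [this, pp_eq_m hn hi, gMinus_inv hn hi]

lemma mm_eq_pp (hn : 4 ≤ n) {i j : Fin n} (hi : 2 ≤ i.val) (hj : 2 ≤ j.val) (hij : i ≠ j) :
    gMinus n i * gMinus n j = gPlus n j * gPlus n i := by
  have h01 := zero_ne_one hn
  have h10 := h01.symm
  have hi0 := ne0 hi
  have h0i := hi0.symm
  have hi1 := ne1 hn hi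
  have h1i := hi1.symm
  have hj0 := ne0 hj
  have h0j := hj0.symm
  have hj1 := ne1 hn hj
  have h1j := hj1.symm
  have hji := hij.symm
  apply Equiv.ext; intro x
  rcases eq_or_ne x 0 with rfl | h0 <;>
  [skip; rcases eq_or_ne x 1 with rfl | h1] <;>
  [skip; skip; rcases eq_or_ne x i with rfl | hxi] <;>
  [skip; skip; skip; rcases eq_or_ne x j with rfl | hxj] <;>
  simp_all [Perm.mul_apply, gPlus_zero, gPlus_one hn, gPlus_self hn, gPlus_ne,
    gMinus_zero hn, gMinus_one, gMinus_self hn, gMinus_ne]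
def As (n : ℕ) [NeZero n] : Set (Equiv.Perm (Fin n)) :=
  {a | a = Equiv.swap 0 1 ∨ ∃ i : Fin n, 2 ≤ i.val ∧ (a = gPlus n i ∨ a = gMinus n i)}

lemma swap_mem : Equiv.swap 0 1 ∈ As n := Or.inl rfl
lemma gPlus_mem {i : Fin n} (hi : 2 ≤ i.val) : gPlus n i ∈ As n :=
  Or.inr ⟨i, hi, Or.inl rfl⟩
lemma gMinus_mem {i : Fin n} (hi : 2 ≤ i.val) : gMinus n i ∈ As n :=
  Or.inr ⟨i, hi, Or.inr rfl⟩

lemma one_notMem (hn : 4 ≤ n) : (1 : Equiv.Perm (Fin n)) ∉ As n := by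
  rintro (h | ⟨i, hi, h | h⟩)
  · have := DFunLike.congr_fun h (0 : Fin n)
    simp only [Perm.one_apply, Equiv.swap_apply_left] at this
    exact zero_ne_one hn this
  · have := DFunLike.congr_fun h (0 : Fin n)
    rw [Perm.one_apply, gPlus_zero] at this
    exact ne0 hi this.symm
  · have := DFunLike.congr_fun h (0 : Fin n)
    rw [Perm.one_apply, gMinus_zero hn hi] at this
    exact zero_ne_one hn this

lemma ne_one_of_mem (hn : 4 ≤ n) {a : Equiv.Perm (Fin n)} (h : a ∈ As n) : a ≠ 1 := by
  rintro rfl; exact one_notMem hn h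

lemma inv_mem (hn : 4 ≤ n) {a : Equiv.Perm (Fin n)} (h : a ∈ As n) : a⁻¹ ∈ As n := by
  rcases h with h | ⟨i, hi, h | h⟩
  · rw [h, Equiv.swap_inv]; exact swap_mem
  · rw [h, gPlus_inv hn hi]; exact gMinus_mem hi
  · rw [h, gMinus_inv hn hi]; exact gPlus_mem hi

lemma rel_iff {p q : Equiv.Perm (Fin n)} :
    (q = p * Equiv.swap 0 1 ∨ agRel n p q) ↔ p⁻¹ * q ∈ As n := by
  unfold agRel As
  simp only [Set.mem_setOf_eq]
  constructor
  · rintro (h | ⟨i, hi, h | h⟩)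
    · exact Or.inl (by rw [h]; group)
    · exact Or.inr ⟨i, hi, Or.inl (by rw [h]; group)⟩
    · exact Or.inr ⟨i, hi, Or.inr (by rw [h]; group)⟩
  · rintro (h | ⟨i, hi, h | h⟩)
    · exact Or.inl (by rw [← h]; group)
    · exact Or.inr ⟨i, hi, Or.inl (by rw [← h]; group)⟩
    · exact Or.inr ⟨i, hi, Or.inr (by rw [← h]; group)⟩

lemma adj_iff (hn : 4 ≤ n) {p q : Equiv.Perm (Fin n)} :
    (SplitStar n).Adj p q ↔ p⁻¹ * q ∈ As n := by
  unfold SplitStar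
  rw [SimpleGraph.fromRel_adj]
  constructor
  · rintro ⟨hne, h | h⟩
    · exact rel_iff.mp h
    · have := inv_mem hn (rel_iff.mp h)
      rwa [mul_inv_rev, inv_inv] at this
  · intro h
    refine ⟨?_, Or.inl (rel_iff.mpr h)⟩
    rintro rfl
    rw [inv_mul_cancel] at h
    exact one_notMem hn h

lemma ncard_idx (hn : 4 ≤ n) : ({i : Fin n | 2 ≤ i.val}).ncard = n - 2 := by
  have hset : {i : Fin n | 2 ≤ i.val} = ({0, 1} : Set (Fin n))ᶜ := by
    ext i
    simp only [Set.mem_setOf_eq, Set.mem_compl_iff, Set.mem_insert_iff, Set.mem_singleton_iff]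
    constructor
    · intro hi
      push_neg
      exact ⟨ne0 hi, ne1 hn hi⟩
    · rintro h
      push_neg at h
      obtain ⟨h0, h1⟩ := h
      have v0 : i.val ≠ 0 := fun hv => h0 (Fin.ext (by simp [hv]))
      have v1 : i.val ≠ 1 := fun hv => h1 (Fin.ext (by rw [hv, one_val hn]))
      omega
  have hcompl := Set.ncard_add_ncard_compl ({0, 1} : Set (Fin n))
  have h2 : ({0, 1} : Set (Fin n)).ncard = 2 := Set.ncard_pair (zero_ne_one hn)
  have hcard : Nat.card (Fin n) = n := by simp
  rw [hset]
  omega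

lemma gPlus_injective : Function.Injective (gPlus n) := by
  intro i j h
  have := DFunLike.congr_fun h (0 : Fin n)
  rwa [gPlus_zero, gPlus_zero] at this

lemma gMinus_injective : Function.Injective (gMinus n) := by
  intro i j h
  have := DFunLike.congr_fun h (1 : Fin n)
  rwa [gMinus_one, gMinus_one] at this

lemma As_eq : As n = {Equiv.swap 0 1} ∪ gPlus n '' {i : Fin n | 2 ≤ i.val}
    ∪ gMinus n '' {i : Fin n | 2 ≤ i.val} := by
  ext a
  simp only [As, Set.mem_setOf_eq, Set.mem_union, Set.mem_singleton_iff, Set.mem_image]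
  constructor
  · rintro (h | ⟨i, hi, h | h⟩)
    · exact Or.inl (Or.inl h)
    · exact Or.inl (Or.inr ⟨i, hi, h.symm⟩)
    · exact Or.inr ⟨i, hi, h.symm⟩
  · rintro ((h | ⟨i, hi, h⟩) | ⟨i, hi, h⟩)
    · exact Or.inl h
    · exact Or.inr ⟨i, hi, Or.inl h.symm⟩
    · exact Or.inr ⟨i, hi, Or.inr h.symm⟩

lemma ncard_As (hn : 4 ≤ n) : (As n).ncard = 2 * n - 3 := by
  rw [As_eq]
  have hPM : Disjoint (gPlus n '' {i : Fin n | 2 ≤ i.val}) (gMinus n '' {i : Fin n | 2 ≤ i.val}) := by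
    rw [Set.disjoint_left]
    rintro a ⟨i, hi, rfl⟩ ⟨j, hj, h⟩
    have := DFunLike.congr_fun h (0 : Fin n)
    rw [gMinus_zero hn hj, gPlus_zero] at this
    exact ne1 hn hi this.symm
  have hSP : Disjoint ({Equiv.swap 0 1} : Set (Equiv.Perm (Fin n)))
      (gPlus n '' {i : Fin n | 2 ≤ i.val} ∪ gMinus n '' {i : Fin n | 2 ≤ i.val}) := by
    rw [Set.disjoint_left]
    rintro a rfl (⟨i, hi, h⟩ | ⟨i, hi, h⟩)
    · have := DFunLike.congr_fun h (0 : Fin n)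
      rw [gPlus_zero, Equiv.swap_apply_left] at this
      exact ne1 hn hi this
    · have := DFunLike.congr_fun h (1 : Fin n)
      rw [gMinus_one, Equiv.swap_apply_right] at this
      exact ne0 hi this
  rw [Set.union_assoc, Set.ncard_union_eq hSP (Set.toFinite _) (Set.toFinite _),
    Set.ncard_union_eq hPM (Set.toFinite _) (Set.toFinite _),
    Set.ncard_image_of_injective _ gPlus_injective,
    Set.ncard_image_of_injective _ gMinus_injective,
    Set.ncard_singleton, ncard_idx hn]
  omega
lemma classify (hn : 4 ≤ n) {t x : Equiv.Perm (Fin n)} (ht : t ∉ As n) (ht1 : t ≠ 1)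
    (hx : x ∈ As n) (hb : t⁻¹ * x ∈ As n) :
    (∃ i : Fin n, 2 ≤ i.val ∧ t = Equiv.swap 1 i ∧ (x = Equiv.swap 0 1 ∨ x = gPlus n i)) ∨
    (∃ i : Fin n, 2 ≤ i.val ∧ t = Equiv.swap 0 i ∧ (x = Equiv.swap 0 1 ∨ x = gMinus n i)) ∨
    (∃ i j : Fin n, 2 ≤ i.val ∧ 2 ≤ j.val ∧ i ≠ j ∧ t = gPlus n i * gPlus n j ∧
      (x = gPlus n i ∨ x = gMinus n j)) ∨
    (∃ i j : Fin n, 2 ≤ i.val ∧ 2 ≤ j.val ∧ i ≠ j ∧ t = gPlus n i * gMinus n j ∧ x = gPlus n i) ∨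
    (∃ i j : Fin n, 2 ≤ i.val ∧ 2 ≤ j.val ∧ i ≠ j ∧ t = gMinus n i * gPlus n j ∧ x = gMinus n i) := by
  have hxb : t = x * (t⁻¹ * x)⁻¹ := by group
  rcases hx with hx | ⟨i, hi, hx | hx⟩ <;> rcases hb with hb | ⟨j, hj, hb | hb⟩
  · -- (s, s) : t = 1
    exact absurd (by rw [hxb, hb, hx, Equiv.swap_inv, Equiv.swap_mul_self]) ht1
  · -- (s, p_j) : t = swap 1 j
    exact Or.inl ⟨j, hj, by rw [hxb, hb, hx, gPlus_inv hn hj, L_sm hn hj], Or.inl hx⟩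
  · -- (s, m_j) : t = swap 0 j
    exact Or.inr (Or.inl ⟨j, hj, by rw [hxb, hb, hx, gMinus_inv hn hj, L_sp hn hj],
      Or.inl hx⟩)
  · -- (p_i, s) : t = swap 1 i
    exact Or.inl ⟨i, hi, by rw [hxb, hb, hx, Equiv.swap_inv, L_ps], Or.inr hx⟩
  · -- (p_i, p_j) : t = p_i * m_j
    rcases eq_or_ne i j with rfl | hij
    · exact absurd (by rw [hxb, hb, hx, gPlus_inv hn hi, pm_one hn hi]) ht1
    · exact Or.inr (Or.inr (Or.inr (Or.inl ⟨i, j, hi, hj, hij,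
        by rw [hxb, hb, hx, gPlus_inv hn hj], hx⟩)))
  · -- (p_i, m_j) : t = p_i * p_j
    rcases eq_or_ne i j with rfl | hij
    · refine absurd ?_ ht
      rw [hxb, hb, hx, gMinus_inv hn hi, pp_eq_m hn hi]
      exact gMinus_mem hi
    · exact Or.inr (Or.inr (Or.inl ⟨i, j, hi, hj, hij,
        by rw [hxb, hb, hx, gMinus_inv hn hj], Or.inl hx⟩))
  · -- (m_i, s) : t = swap 0 i
    exact Or.inr (Or.inl ⟨i, hi, by rw [hxb, hb, hx, Equiv.swap_inv, L_ms], Or.inr hx⟩)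
  · -- (m_i, p_j) : t = m_i * m_j = p_j * p_i
    rcases eq_or_ne i j with rfl | hij
    · refine absurd ?_ ht
      rw [hxb, hb, hx, gPlus_inv hn hi, mm_eq_p hn hi]
      exact gPlus_mem hi
    · exact Or.inr (Or.inr (Or.inl ⟨j, i, hj, hi, Ne.symm hij,
        by rw [hxb, hb, hx, gPlus_inv hn hj, mm_eq_pp hn hi hj hij], Or.inr hx⟩))
  · -- (m_i, m_j) : t = m_i * p_j
    rcases eq_or_ne i j with rfl | hij
    · exact absurd (by rw [hxb, hb, hx, gMinus_inv hn hi, mp_one hn hi]) ht1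
    · exact Or.inr (Or.inr (Or.inr (Or.inr ⟨i, j, hi, hj, hij,
        by rw [hxb, hb, hx, gMinus_inv hn hj], hx⟩)))
def It (n : ℕ) [NeZero n] (t : Equiv.Perm (Fin n)) : Set (Equiv.Perm (Fin n)) :=
  {x | x ∈ As n ∧ t⁻¹ * x ∈ As n}

section Values
variable (hn : 4 ≤ n) {i j : Fin n} (hi : 2 ≤ i.val) (hj : 2 ≤ j.val) (hij : i ≠ j)

include hn hi hj hij in
lemma V3_0 : (gPlus n i * gPlus n j) 0 = j := by
  rw [Perm.mul_apply, gPlus_zero, gPlus_ne (ne0 hj) (ne1 hn hj) (Ne.symm hij)]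
include hn hj in
lemma V3_1 : (gPlus n i * gPlus n j) 1 = i := by
  rw [Perm.mul_apply, gPlus_one hn hj, gPlus_zero]
include hn hi hij in
lemma V3_i : (gPlus n i * gPlus n j) i = 1 := by
  rw [Perm.mul_apply, gPlus_ne (ne0 hi) (ne1 hn hi) hij, gPlus_self hn hi]
include hn hi hj in
lemma V3_j : (gPlus n i * gPlus n j) j = 0 := by
  rw [Perm.mul_apply, gPlus_self hn hj, gPlus_one hn hi]
lemma V3_ne {x : Fin n} (h0 : x ≠ 0) (h1 : x ≠ 1) (hxi : x ≠ i) (hxj : x ≠ j) :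
    (gPlus n i * gPlus n j) x = x := by
  rw [Perm.mul_apply, gPlus_ne h0 h1 hxj, gPlus_ne h0 h1 hxi]

include hn hi hj in
lemma V4_0 : (gPlus n i * gMinus n j) 0 = 0 := by
  rw [Perm.mul_apply, gMinus_zero hn hj, gPlus_one hn hi]
include hn hj hij in
lemma V4_1 : (gPlus n i * gMinus n j) 1 = j := by
  rw [Perm.mul_apply, gMinus_one, gPlus_ne (ne0 hj) (ne1 hn hj) (Ne.symm hij)]
include hn hj in
lemma V4_j : (gPlus n i * gMinus n j) j = i := by
  rw [Perm.mul_apply, gMinus_self hn hj, gPlus_zero]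
include hn hi hij in
lemma V4_i : (gPlus n i * gMinus n j) i = 1 := by
  rw [Perm.mul_apply, gMinus_ne (ne0 hi) (ne1 hn hi) hij, gPlus_self hn hi]
lemma V4_ne {x : Fin n} (h0 : x ≠ 0) (h1 : x ≠ 1) (hxi : x ≠ i) (hxj : x ≠ j) :
    (gPlus n i * gMinus n j) x = x := by
  rw [Perm.mul_apply, gMinus_ne h0 h1 hxj, gPlus_ne h0 h1 hxi]

include hn hj hij in
lemma V5_0 : (gMinus n i * gPlus n j) 0 = j := by
  rw [Perm.mul_apply, gPlus_zero, gMinus_ne (ne0 hj) (ne1 hn hj) (Ne.symm hij)]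
include hn hi hj in
lemma V5_1 : (gMinus n i * gPlus n j) 1 = 1 := by
  rw [Perm.mul_apply, gPlus_one hn hj, gMinus_zero hn hi]
include hn hj in
lemma V5_j : (gMinus n i * gPlus n j) j = i := by
  rw [Perm.mul_apply, gPlus_self hn hj, gMinus_one]
include hn hi hij in
lemma V5_i : (gMinus n i * gPlus n j) i = 0 := by
  rw [Perm.mul_apply, gPlus_ne (ne0 hi) (ne1 hn hi) hij, gMinus_self hn hi]
lemma V5_ne {x : Fin n} (h0 : x ≠ 0) (h1 : x ≠ 1) (hxi : x ≠ i) (hxj : x ≠ j) :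
    (gMinus n i * gPlus n j) x = x := by
  rw [Perm.mul_apply, gPlus_ne h0 h1 hxj, gMinus_ne h0 h1 hxi]

include hn hi in
lemma sw1i_0 : (Equiv.swap 1 i : Equiv.Perm (Fin n)) 0 = 0 :=
  Equiv.swap_apply_of_ne_of_ne (zero_ne_one hn) (Ne.symm (ne0 hi))
lemma sw1i_1 : (Equiv.swap 1 i : Equiv.Perm (Fin n)) 1 = i := Equiv.swap_apply_left 1 i
lemma sw1i_i : (Equiv.swap 1 i : Equiv.Perm (Fin n)) i = 1 := Equiv.swap_apply_right 1 i
lemma sw1i_ne {x : Fin n} (h1 : x ≠ 1) (hxi : x ≠ i) :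
    (Equiv.swap 1 i : Equiv.Perm (Fin n)) x = x := Equiv.swap_apply_of_ne_of_ne h1 hxi
lemma sw0i_0 : (Equiv.swap 0 i : Equiv.Perm (Fin n)) 0 = i := Equiv.swap_apply_left 0 i
include hn hi in
lemma sw0i_1 : (Equiv.swap 0 i : Equiv.Perm (Fin n)) 1 = 1 :=
  Equiv.swap_apply_of_ne_of_ne (Ne.symm (zero_ne_one hn)) (Ne.symm (ne1 hn hi))
lemma sw0i_i : (Equiv.swap 0 i : Equiv.Perm (Fin n)) i = 0 := Equiv.swap_apply_right 0 i
lemma sw0i_ne {x : Fin n} (h0 : x ≠ 0) (hxi : x ≠ i) :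
    (Equiv.swap 0 i : Equiv.Perm (Fin n)) x = x := Equiv.swap_apply_of_ne_of_ne h0 hxi

include hn hi in
lemma sw1i_ne_one : (Equiv.swap 1 i : Equiv.Perm (Fin n)) ≠ 1 := by
  intro h
  have := DFunLike.congr_fun h (1 : Fin n)
  rw [sw1i_1, Perm.one_apply] at this
  exact ne1 hn hi this
include hi in
lemma sw0i_ne_one : (Equiv.swap 0 i : Equiv.Perm (Fin n)) ≠ 1 := by
  intro h
  have := DFunLike.congr_fun h (0 : Fin n)
  rw [sw0i_0, Perm.one_apply] at this
  exact ne0 hi this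
include hn hi hj hij in
lemma pp_inv : (gPlus n i * gPlus n j)⁻¹ = gPlus n i * gPlus n j := by
  rw [mul_inv_rev, gPlus_inv hn hi, gPlus_inv hn hj, mm_eq_pp hn hj hi (Ne.symm hij)]

end Values
lemma U1 (hn : 4 ≤ n) {i : Fin n} (hi : 2 ≤ i.val) (ht : Equiv.swap 1 i ∉ As n) :
    It n (Equiv.swap 1 i) ⊆ {Equiv.swap 0 1, gPlus n i} := by
  rintro x ⟨hx, hb⟩
  rcases classify hn ht (sw1i_ne_one hn hi) hx hb with
    ⟨i', hi', hteq, hor⟩ | ⟨i', hi', hteq, hor⟩ |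
    ⟨i', j', hi', hj', hij', hteq, hor⟩ | ⟨i', j', hi', hj', hij', hteq, hor⟩ |
    ⟨i', j', hi', hj', hij', hteq, hor⟩
  · -- D1 : identify i = i'
    have h1 := DFunLike.congr_fun hteq (1 : Fin n)
    rw [sw1i_1, sw1i_1] at h1
    subst h1
    rcases hor with h | h
    · exact Or.inl h
    · exact Or.inr h
  · -- D2 : contra at 1
    have h1 := DFunLike.congr_fun hteq (1 : Fin n)
    rw [sw1i_1, sw0i_1 hn hi'] at h1
    exact absurd h1 (ne1 hn hi)
  · -- D3 : contra at 0
    have h0 := DFunLike.congr_fun hteq (0 : Fin n)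
    rw [sw1i_0 hn hi, V3_0 hn hi' hj' hij'] at h0
    exact absurd h0.symm (ne0 hj')
  · -- D4 : i = j' then contra at i
    have h1 := DFunLike.congr_fun hteq (1 : Fin n)
    rw [sw1i_1, V4_1 hn hj' hij'] at h1
    subst h1
    have h2 := DFunLike.congr_fun hteq i
    rw [sw1i_i, V4_j hn hi] at h2
    exact absurd h2.symm (ne1 hn hi')
  · -- D5 : contra at 1
    have h1 := DFunLike.congr_fun hteq (1 : Fin n)
    rw [sw1i_1, V5_1 hn hi' hj'] at h1
    exact absurd h1 (ne1 hn hi)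

lemma U2 (hn : 4 ≤ n) {i : Fin n} (hi : 2 ≤ i.val) (ht : Equiv.swap 0 i ∉ As n) :
    It n (Equiv.swap 0 i) ⊆ {Equiv.swap 0 1, gMinus n i} := by
  rintro x ⟨hx, hb⟩
  rcases classify hn ht (sw0i_ne_one hi) hx hb with
    ⟨i', hi', hteq, hor⟩ | ⟨i', hi', hteq, hor⟩ |
    ⟨i', j', hi', hj', hij', hteq, hor⟩ | ⟨i', j', hi', hj', hij', hteq, hor⟩ |
    ⟨i', j', hi', hj', hij', hteq, hor⟩
  · -- D1 : contra at 0
    have h0 := DFunLike.congr_fun hteq (0 : Fin n)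
    rw [sw0i_0, sw1i_0 hn hi'] at h0
    exact absurd h0 (ne0 hi)
  · -- D2 : identify
    have h0 := DFunLike.congr_fun hteq (0 : Fin n)
    rw [sw0i_0, sw0i_0] at h0
    subst h0
    rcases hor with h | h
    · exact Or.inl h
    · exact Or.inr h
  · -- D3 : contra at 1
    have h1 := DFunLike.congr_fun hteq (1 : Fin n)
    rw [sw0i_1 hn hi, V3_1 hn hj'] at h1
    exact absurd h1.symm (ne1 hn hi')
  · -- D4 : contra at 0
    have h0 := DFunLike.congr_fun hteq (0 : Fin n)
    rw [sw0i_0, V4_0 hn hi' hj'] at h0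
    exact absurd h0 (ne0 hi)
  · -- D5 : i = j', contra at i
    have h0 := DFunLike.congr_fun hteq (0 : Fin n)
    rw [sw0i_0, V5_0 hn hj' hij'] at h0
    subst h0
    have h2 := DFunLike.congr_fun hteq i
    rw [sw0i_i, V5_j hn hi] at h2
    exact absurd h2.symm (ne0 hi')

lemma U3 (hn : 4 ≤ n) {i j : Fin n} (hi : 2 ≤ i.val) (hj : 2 ≤ j.val) (hij : i ≠ j)
    (ht : gPlus n i * gPlus n j ∉ As n) :
    It n (gPlus n i * gPlus n j) ⊆ {gPlus n i, gMinus n j} := by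
  have htne : gPlus n i * gPlus n j ≠ 1 := by
    intro h
    have := DFunLike.congr_fun h (0 : Fin n)
    rw [V3_0 hn hi hj hij, Perm.one_apply] at this
    exact ne0 hj this
  rintro x ⟨hx, hb⟩
  rcases classify hn ht htne hx hb with
    ⟨i', hi', hteq, hor⟩ | ⟨i', hi', hteq, hor⟩ |
    ⟨i', j', hi', hj', hij', hteq, hor⟩ | ⟨i', j', hi', hj', hij', hteq, hor⟩ |
    ⟨i', j', hi', hj', hij', hteq, hor⟩
  · -- D1: contra at 0
    have h0 := DFunLike.congr_fun hteq (0 : Fin n)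
    rw [V3_0 hn hi hj hij, sw1i_0 hn hi'] at h0
    exact absurd h0 (ne0 hj)
  · -- D2: contra at 1
    have h1 := DFunLike.congr_fun hteq (1 : Fin n)
    rw [V3_1 hn hj, sw0i_1 hn hi'] at h1
    exact absurd h1 (ne1 hn hi)
  · -- D3: identify i = i', j = j'
    have h0 := DFunLike.congr_fun hteq (0 : Fin n)
    rw [V3_0 hn hi hj hij, V3_0 hn hi' hj' hij'] at h0
    have h1 := DFunLike.congr_fun hteq (1 : Fin n)
    rw [V3_1 hn hj, V3_1 hn hj'] at h1
    subst h0; subst h1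
    rcases hor with h | h
    · exact Or.inl h
    · exact Or.inr h
  · -- D4: contra at 0
    have h0 := DFunLike.congr_fun hteq (0 : Fin n)
    rw [V3_0 hn hi hj hij, V4_0 hn hi' hj'] at h0
    exact absurd h0 (ne0 hj)
  · -- D5: contra at 1
    have h1 := DFunLike.congr_fun hteq (1 : Fin n)
    rw [V3_1 hn hj, V5_1 hn hi' hj'] at h1
    exact absurd h1 (ne1 hn hi)

lemma U4 (hn : 4 ≤ n) {i j : Fin n} (hi : 2 ≤ i.val) (hj : 2 ≤ j.val) (hij : i ≠ j)
    (ht : gPlus n i * gMinus n j ∉ As n) :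
    It n (gPlus n i * gMinus n j) ⊆ {gPlus n i} := by
  have htne : gPlus n i * gMinus n j ≠ 1 := by
    intro h
    have := DFunLike.congr_fun h (1 : Fin n)
    rw [V4_1 hn hj hij, Perm.one_apply] at this
    exact ne1 hn hj this
  rintro x ⟨hx, hb⟩
  rcases classify hn ht htne hx hb with
    ⟨i', hi', hteq, hor⟩ | ⟨i', hi', hteq, hor⟩ |
    ⟨i', j', hi', hj', hij', hteq, hor⟩ | ⟨i', j', hi', hj', hij', hteq, hor⟩ |
    ⟨i', j', hi', hj', hij', hteq, hor⟩
  · -- D1: j = i', contra at j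
    have h1 := DFunLike.congr_fun hteq (1 : Fin n)
    rw [V4_1 hn hj hij, sw1i_1] at h1
    subst h1
    have h2 := DFunLike.congr_fun hteq j
    rw [V4_j hn hj, sw1i_i] at h2
    exact absurd h2 (ne1 hn hi)
  · -- D2: contra at 1
    have h1 := DFunLike.congr_fun hteq (1 : Fin n)
    rw [V4_1 hn hj hij, sw0i_1 hn hi'] at h1
    exact absurd h1 (ne1 hn hj)
  · -- D3: contra at 0
    have h0 := DFunLike.congr_fun hteq (0 : Fin n)
    rw [V4_0 hn hi hj, V3_0 hn hi' hj' hij'] at h0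
    exact absurd h0.symm (ne0 hj')
  · -- D4: identify
    have h1 := DFunLike.congr_fun hteq (1 : Fin n)
    rw [V4_1 hn hj hij, V4_1 hn hj' hij'] at h1
    subst h1
    have h2 := DFunLike.congr_fun hteq j
    rw [V4_j hn hj, V4_j hn hj] at h2
    subst h2
    exact hor
  · -- D5: contra at 1
    have h1 := DFunLike.congr_fun hteq (1 : Fin n)
    rw [V4_1 hn hj hij, V5_1 hn hi' hj'] at h1
    exact absurd h1 (ne1 hn hj)

lemma U5 (hn : 4 ≤ n) {i j : Fin n} (hi : 2 ≤ i.val) (hj : 2 ≤ j.val) (hij : i ≠ j)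
    (ht : gMinus n i * gPlus n j ∉ As n) :
    It n (gMinus n i * gPlus n j) ⊆ {gMinus n i} := by
  have htne : gMinus n i * gPlus n j ≠ 1 := by
    intro h
    have := DFunLike.congr_fun h (0 : Fin n)
    rw [V5_0 hn hj hij, Perm.one_apply] at this
    exact ne0 hj this
  rintro x ⟨hx, hb⟩
  rcases classify hn ht htne hx hb with
    ⟨i', hi', hteq, hor⟩ | ⟨i', hi', hteq, hor⟩ |
    ⟨i', j', hi', hj', hij', hteq, hor⟩ | ⟨i', j', hi', hj', hij', hteq, hor⟩ |
    ⟨i', j', hi', hj', hij', hteq, hor⟩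
  · -- D1: contra at 1
    have h1 := DFunLike.congr_fun hteq (1 : Fin n)
    rw [V5_1 hn hi hj, sw1i_1] at h1
    exact absurd h1.symm (ne1 hn hi')
  · -- D2: j = i', contra at j
    have h0 := DFunLike.congr_fun hteq (0 : Fin n)
    rw [V5_0 hn hj hij, sw0i_0] at h0
    subst h0
    have h2 := DFunLike.congr_fun hteq j
    rw [V5_j hn hj, sw0i_i] at h2
    exact absurd h2 (ne0 hi)
  · -- D3: contra at 1
    have h1 := DFunLike.congr_fun hteq (1 : Fin n)
    rw [V5_1 hn hi hj, V3_1 hn hj'] at h1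
    exact absurd h1.symm (ne1 hn hi')
  · -- D4: contra at 1
    have h1 := DFunLike.congr_fun hteq (1 : Fin n)
    rw [V5_1 hn hi hj, V4_1 hn hj' hij'] at h1
    exact absurd h1.symm (ne1 hn hj')
  · -- D5: identify
    have h0 := DFunLike.congr_fun hteq (0 : Fin n)
    rw [V5_0 hn hj hij, V5_0 hn hj' hij'] at h0
    subst h0
    have h2 := DFunLike.congr_fun hteq j
    rw [V5_j hn hj, V5_j hn hj] at h2
    subst h2
    exact hor
lemma H_sw1_s {i : Fin n} : Equiv.swap 1 i * Equiv.swap 0 1 = gPlus n i := by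
  rw [← L_ps, mul_assoc, Equiv.swap_mul_self, mul_one]
lemma H_sw0_s {i : Fin n} : Equiv.swap 0 i * Equiv.swap 0 1 = gMinus n i := by
  rw [← L_ms, mul_assoc, Equiv.swap_mul_self, mul_one]
lemma H_sw1_p (hn : 4 ≤ n) {i : Fin n} (hi : 2 ≤ i.val) :
    Equiv.swap 1 i * gPlus n i = Equiv.swap 0 1 := by
  rw [← L_sm hn hi, mul_assoc, mp_one hn hi, mul_one]
lemma H_sw0_m (hn : 4 ≤ n) {i : Fin n} (hi : 2 ≤ i.val) :
    Equiv.swap 0 i * gMinus n i = Equiv.swap 0 1 := by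
  rw [← L_sp hn hi, mul_assoc, pm_one hn hi, mul_one]
lemma H_pp_p (hn : 4 ≤ n) {i j : Fin n} (hi : 2 ≤ i.val) (hj : 2 ≤ j.val) :
    (gPlus n i * gPlus n j)⁻¹ * gPlus n i = gMinus n j := by
  rw [mul_inv_rev, gPlus_inv hn hi, gPlus_inv hn hj, mul_assoc, mp_one hn hi, mul_one]
lemma H_pp_m (hn : 4 ≤ n) {i j : Fin n} (hi : 2 ≤ i.val) (hj : 2 ≤ j.val) (hij : i ≠ j) :
    (gPlus n i * gPlus n j)⁻¹ * gMinus n j = gPlus n i := by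
  rw [pp_inv hn hi hj hij, mul_assoc, pm_one hn hj, mul_one]

def Tform (n : ℕ) [NeZero n] (t : Equiv.Perm (Fin n)) : Prop :=
  (∃ i : Fin n, 2 ≤ i.val ∧ t = Equiv.swap 1 i) ∨
  (∃ i : Fin n, 2 ≤ i.val ∧ t = Equiv.swap 0 i) ∨
  (∃ i j : Fin n, 2 ≤ i.val ∧ 2 ≤ j.val ∧ i ≠ j ∧ t = gPlus n i * gPlus n j)
lemma shared (hn : 4 ≤ n) {t1 t3 : Equiv.Perm (Fin n)}
    (h1 : Tform n t1) (h3 : Tform n t3) (h2 : Tform n (t1⁻¹ * t3)) :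
    ∃ x, x ∈ As n ∧ t1⁻¹ * x ∈ As n ∧ t3⁻¹ * x ∈ As n := by
  rcases h1 with ⟨b, hb, rfl⟩ | ⟨a, ha, rfl⟩ | ⟨a, b, ha, hb, hab, rfl⟩
  · -- t1 = swap 1 b
    rw [Equiv.swap_inv] at h2
    rcases h3 with ⟨b', hb', rfl⟩ | ⟨a', ha', rfl⟩ | ⟨c, d, hc, hd, hcd, rfl⟩
    · exact ⟨Equiv.swap 0 1, swap_mem,
        by rw [Equiv.swap_inv, H_sw1_s]; exact gPlus_mem hb,
        by rw [Equiv.swap_inv, H_sw1_s]; exact gPlus_mem hb'⟩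
    · exact ⟨Equiv.swap 0 1, swap_mem,
        by rw [Equiv.swap_inv, H_sw1_s]; exact gPlus_mem hb,
        by rw [Equiv.swap_inv, H_sw0_s]; exact gMinus_mem ha'⟩
    · -- t3 = p_c p_d; force c = b
      have hcb : c = b := by
        rcases h2 with ⟨e, he, ht2⟩ | ⟨e, he, ht2⟩ | ⟨e, f, he, hf, hef, ht2⟩
        · rcases eq_or_ne c b with rfl | hne
          · rfl
          · have hv1 := DFunLike.congr_fun ht2 (1 : Fin n)
            rw [Perm.mul_apply, V3_1 hn hd, sw1i_1, sw1i_ne (ne1 hn hc) hne] at hv1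
            have hv2 := DFunLike.congr_fun ht2 c
            rw [Perm.mul_apply, V3_i hn hc hcd, sw1i_1, ← hv1, sw1i_i] at hv2
            exact absurd hv2 (ne1 hn hb)
        · rcases eq_or_ne c b with rfl | hne
          · rfl
          · have hv := DFunLike.congr_fun ht2 (1 : Fin n)
            rw [Perm.mul_apply, V3_1 hn hd, sw1i_ne (ne1 hn hc) hne, sw0i_1 hn he] at hv
            exact absurd hv (ne1 hn hc)
        · rcases eq_or_ne c b with rfl | hne
          · rfl
          · have hv1 := DFunLike.congr_fun ht2 (1 : Fin n)
            rw [Perm.mul_apply, V3_1 hn hd, sw1i_ne (ne1 hn hc) hne, V3_1 hn hf] at hv1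
            subst hv1
            have hv2 := DFunLike.congr_fun ht2 c
            rw [Perm.mul_apply, V3_i hn hc hcd, sw1i_1, V3_i hn hc hef] at hv2
            exact absurd hv2 (ne1 hn hb)
      subst hcb
      exact ⟨gPlus n c, gPlus_mem hc,
        by rw [Equiv.swap_inv, H_sw1_p hn hc]; exact swap_mem,
        by rw [H_pp_p hn hc hd]; exact gMinus_mem hd⟩
  · -- t1 = swap 0 a
    rw [Equiv.swap_inv] at h2
    rcases h3 with ⟨b', hb', rfl⟩ | ⟨a', ha', rfl⟩ | ⟨c, d, hc, hd, hcd, rfl⟩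
    · exact ⟨Equiv.swap 0 1, swap_mem,
        by rw [Equiv.swap_inv, H_sw0_s]; exact gMinus_mem ha,
        by rw [Equiv.swap_inv, H_sw1_s]; exact gPlus_mem hb'⟩
    · exact ⟨Equiv.swap 0 1, swap_mem,
        by rw [Equiv.swap_inv, H_sw0_s]; exact gMinus_mem ha,
        by rw [Equiv.swap_inv, H_sw0_s]; exact gMinus_mem ha'⟩
    · -- t3 = p_c p_d; force d = a
      have hda : d = a := by
        rcases h2 with ⟨e, he, ht2⟩ | ⟨e, he, ht2⟩ | ⟨e, f, he, hf, hef, ht2⟩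
        · rcases eq_or_ne d a with rfl | hne
          · rfl
          · have hv := DFunLike.congr_fun ht2 (0 : Fin n)
            rw [Perm.mul_apply, V3_0 hn hc hd hcd, sw0i_ne (ne0 hd) hne, sw1i_0 hn he] at hv
            exact absurd hv (ne0 hd)
        · rcases eq_or_ne d a with rfl | hne
          · rfl
          · have hv := DFunLike.congr_fun ht2 (1 : Fin n)
            rcases eq_or_ne c a with rfl | hne2
            · rw [Perm.mul_apply, V3_1 hn hd, sw0i_i, sw0i_1 hn he] at hv
              exact absurd hv (zero_ne_one hn)
            · rw [Perm.mul_apply, V3_1 hn hd, sw0i_ne (ne0 hc) hne2, sw0i_1 hn he] at hv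
              exact absurd hv (ne1 hn hc)
        · rcases eq_or_ne d a with rfl | hne
          · rfl
          · have hv1 := DFunLike.congr_fun ht2 (0 : Fin n)
            rw [Perm.mul_apply, V3_0 hn hc hd hcd, sw0i_ne (ne0 hd) hne,
              V3_0 hn he hf hef] at hv1
            subst hv1
            have hv2 := DFunLike.congr_fun ht2 d
            rw [Perm.mul_apply, V3_j hn hc hd, sw0i_0, V3_j hn he hd] at hv2
            exact absurd hv2 (ne0 ha)
      subst hda
      exact ⟨gMinus n d, gMinus_mem hd,
        by rw [Equiv.swap_inv, H_sw0_m hn hd]; exact swap_mem,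
        by rw [H_pp_m hn hc hd hcd]; exact gPlus_mem hc⟩
  · -- t1 = p_a p_b
    rw [pp_inv hn ha hb hab] at h2
    rcases h3 with ⟨e, he, rfl⟩ | ⟨e, he, rfl⟩ | ⟨c, d, hc, hd, hcd, rfl⟩
    · -- t3 = swap 1 e; force e = a
      have hea : e = a := by
        rcases h2 with ⟨f, hf, ht2⟩ | ⟨f, hf, ht2⟩ | ⟨f, g, hf, hg, hfg, ht2⟩
        · have hv := DFunLike.congr_fun ht2 (0 : Fin n)
          rw [Perm.mul_apply, sw1i_0 hn he, V3_0 hn ha hb hab, sw1i_0 hn hf] at hv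
          exact absurd hv (ne0 hb)
        · rcases eq_or_ne e a with rfl | hne
          · rfl
          rcases eq_or_ne e b with rfl | hne2
          · have hv := DFunLike.congr_fun ht2 (1 : Fin n)
            rw [Perm.mul_apply, sw1i_1, V3_j hn ha hb, sw0i_1 hn hf] at hv
            exact absurd hv (zero_ne_one hn)
          · have hv := DFunLike.congr_fun ht2 (1 : Fin n)
            rw [Perm.mul_apply, sw1i_1, V3_ne (ne0 he) (ne1 hn he) hne hne2,
              sw0i_1 hn hf] at hv
            exact absurd hv (ne1 hn he)
        · rcases eq_or_ne e a with rfl | hne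
          · rfl
          rcases eq_or_ne e b with rfl | hne2
          · have hv := DFunLike.congr_fun ht2 (1 : Fin n)
            rw [Perm.mul_apply, sw1i_1, V3_j hn ha hb, V3_1 hn hg] at hv
            exact absurd hv.symm (ne0 hf)
          · have hv1 := DFunLike.congr_fun ht2 (1 : Fin n)
            rw [Perm.mul_apply, sw1i_1, V3_ne (ne0 he) (ne1 hn he) hne hne2,
              V3_1 hn hg] at hv1
            subst hv1
            have hv2 := DFunLike.congr_fun ht2 e
            rw [Perm.mul_apply, sw1i_i, V3_1 hn hb, V3_i hn he hfg] at hv2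
            exact absurd hv2 (ne1 hn ha)
      subst hea
      exact ⟨gPlus n e, gPlus_mem he,
        by rw [H_pp_p hn he hb]; exact gMinus_mem hb,
        by rw [Equiv.swap_inv, H_sw1_p hn he]; exact swap_mem⟩
    · -- t3 = swap 0 e; force e = b
      have heb : e = b := by
        rcases h2 with ⟨f, hf, ht2⟩ | ⟨f, hf, ht2⟩ | ⟨f, g, hf, hg, hfg, ht2⟩
        · rcases eq_or_ne e b with rfl | hne
          · rfl
          rcases eq_or_ne e a with rfl | hne2
          · have hv := DFunLike.congr_fun ht2 (0 : Fin n)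
            rw [Perm.mul_apply, sw0i_0, V3_i hn ha hab, sw1i_0 hn hf] at hv
            exact absurd hv.symm (zero_ne_one hn)
          · have hv := DFunLike.congr_fun ht2 (0 : Fin n)
            rw [Perm.mul_apply, sw0i_0, V3_ne (ne0 he) (ne1 hn he) hne2 hne,
              sw1i_0 hn hf] at hv
            exact absurd hv (ne0 he)
        · have hv := DFunLike.congr_fun ht2 (1 : Fin n)
          rw [Perm.mul_apply, sw0i_1 hn he, V3_1 hn hb, sw0i_1 hn hf] at hv
          exact absurd hv (ne1 hn ha)
        · rcases eq_or_ne e b with rfl | hne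
          · rfl
          rcases eq_or_ne e a with rfl | hne2
          · have hv := DFunLike.congr_fun ht2 (0 : Fin n)
            rw [Perm.mul_apply, sw0i_0, V3_i hn ha hab, V3_0 hn hf hg hfg] at hv
            exact absurd hv.symm (ne1 hn hg)
          · have hv1 := DFunLike.congr_fun ht2 (0 : Fin n)
            rw [Perm.mul_apply, sw0i_0, V3_ne (ne0 he) (ne1 hn he) hne2 hne,
              V3_0 hn hf hg hfg] at hv1
            subst hv1
            have hv2 := DFunLike.congr_fun ht2 e
            rw [Perm.mul_apply, sw0i_i, V3_0 hn ha hb hab, V3_j hn hf he] at hv2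
            exact absurd hv2 (ne0 hb)
      subst heb
      exact ⟨gMinus n e, gMinus_mem he,
        by rw [H_pp_m hn ha he hab]; exact gPlus_mem ha,
        by rw [Equiv.swap_inv, H_sw0_m hn he]; exact swap_mem⟩
    · -- t3 = p_c p_d; contradiction
      exfalso
      rcases h2 with ⟨f, hf, ht2⟩ | ⟨f, hf, ht2⟩ | ⟨f, g, hf, hg, hfg, ht2⟩
      · -- t2 = swap 1 f
        have hv1 := DFunLike.congr_fun ht2 (0 : Fin n)
        rw [Perm.mul_apply, V3_0 hn hc hd hcd, sw1i_0 hn hf] at hv1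
        rcases eq_or_ne d a with rfl | hda
        · rw [V3_i hn ha hab] at hv1
          exact (zero_ne_one hn) hv1.symm
        rcases eq_or_ne d b with rfl | hdb
        · -- d = b : continue at 1
          have hv2 := DFunLike.congr_fun ht2 (1 : Fin n)
          rw [Perm.mul_apply, V3_1 hn hb, sw1i_1] at hv2
          rcases eq_or_ne c a with rfl | hca
          · rw [V3_i hn ha hab] at hv2
            exact (ne1 hn hf) hv2.symm
          rcases eq_or_ne c d with rfl | hcb
          · exact hcd rfl
          · rw [V3_ne (ne0 hc) (ne1 hn hc) hca hcb] at hv2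
            subst hv2
            have hv3 := DFunLike.congr_fun ht2 c
            rw [Perm.mul_apply, V3_i hn hc hcd, V3_1 hn hb, sw1i_i] at hv3
            exact (ne1 hn ha) hv3
        · rw [V3_ne (ne0 hd) (ne1 hn hd) hda hdb] at hv1
          exact (ne0 hd) hv1
      · -- t2 = swap 0 f
        have hv1 := DFunLike.congr_fun ht2 (1 : Fin n)
        rw [Perm.mul_apply, V3_1 hn hd, sw0i_1 hn hf] at hv1
        rcases eq_or_ne c a with rfl | hca
        · -- c = a : continue at 0
          have hv2 := DFunLike.congr_fun ht2 (0 : Fin n)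
          rw [Perm.mul_apply, V3_0 hn ha hd hcd, sw0i_0] at hv2
          rcases eq_or_ne d c with rfl | hda
          · exact hcd rfl.symm
          rcases eq_or_ne d b with rfl | hdb
          · rw [V3_j hn ha hb] at hv2
            exact (ne0 hf) hv2.symm
          · rw [V3_ne (ne0 hd) (ne1 hn hd) hda hdb] at hv2
            subst hv2
            have hv3 := DFunLike.congr_fun ht2 d
            rw [Perm.mul_apply, V3_j hn ha hd, V3_0 hn ha hb hab, sw0i_i] at hv3
            exact (ne0 hb) hv3
        rcases eq_or_ne c b with rfl | hcb
        · rw [V3_j hn ha hb] at hv1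
          exact (zero_ne_one hn) hv1
        · rw [V3_ne (ne0 hc) (ne1 hn hc) hca hcb] at hv1
          exact (ne1 hn hc) hv1
      · -- t2 = p_f p_g
        have hv1 := DFunLike.congr_fun ht2 (0 : Fin n)
        rw [Perm.mul_apply, V3_0 hn hc hd hcd, V3_0 hn hf hg hfg] at hv1
        rcases eq_or_ne d a with rfl | hda
        · rw [V3_i hn ha hab] at hv1
          exact (ne1 hn hg) hv1.symm
        rcases eq_or_ne d b with rfl | hdb
        · rw [V3_j hn ha hb] at hv1
          exact (ne0 hg) hv1.symm
        · rw [V3_ne (ne0 hd) (ne1 hn hd) hda hdb] at hv1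
          subst hv1
          have hv2 := DFunLike.congr_fun ht2 d
          rw [Perm.mul_apply, V3_j hn hc hd, V3_0 hn ha hb hab, V3_j hn hf hd] at hv2
          exact (ne0 hb) hv2
lemma ncard_pair_le (c d : Equiv.Perm (Fin n)) : ({c, d} : Set (Equiv.Perm (Fin n))).ncard ≤ 2 :=
  le_trans (Set.ncard_insert_le c {d}) (by simp)

lemma subset_pair_ncard_le {Y : Set (Equiv.Perm (Fin n))} {c d : Equiv.Perm (Fin n)}
    (h : Y ⊆ {c, d}) : Y.ncard ≤ 2 :=
  (Set.ncard_le_ncard h (Set.toFinite _)).trans (ncard_pair_le c d)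

lemma subset_singleton_ncard_le {Y : Set (Equiv.Perm (Fin n))} {c : Equiv.Perm (Fin n)}
    (h : Y ⊆ {c}) : Y.ncard ≤ 1 := by
  simpa using Set.ncard_le_ncard h (Set.toFinite _)

lemma diff_single {Y : Set (Equiv.Perm (Fin n))} {c d x : Equiv.Perm (Fin n)}
    (hY : Y ⊆ {c, d}) (hx : x ∈ Y) : (Y \ {x}).ncard ≤ 1 := by
  rcases hY hx with rfl | hxd
  · refine subset_singleton_ncard_le (c := d) ?_
    rintro y ⟨hy, hne⟩
    rcases hY hy with rfl | h
    · exact absurd rfl hne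
    · exact h
  · rw [Set.mem_singleton_iff] at hxd
    subst hxd
    refine subset_singleton_ncard_le (c := c) ?_
    rintro y ⟨hy, hne⟩
    rcases hY hy with rfl | h
    · rfl
    · exact absurd h hne

lemma It_cases (hn : 4 ≤ n) {t : Equiv.Perm (Fin n)} (ht : t ∉ As n) (ht1 : t ≠ 1)
    (hne : (It n t).Nonempty) :
    (Tform n t ∧ ∃ c d : Equiv.Perm (Fin n), It n t ⊆ {c, d}) ∨
      (∃ c : Equiv.Perm (Fin n), It n t ⊆ {c}) := by
  obtain ⟨x, hx, hb⟩ := hne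
  rcases classify hn ht ht1 hx hb with ⟨i, hi, hteq, -⟩ | ⟨i, hi, hteq, -⟩ |
    ⟨i, j, hi, hj, hij, hteq, -⟩ | ⟨i, j, hi, hj, hij, hteq, -⟩ | ⟨i, j, hi, hj, hij, hteq, -⟩
  · subst hteq; exact Or.inl ⟨Or.inl ⟨i, hi, rfl⟩, _, _, U1 hn hi ht⟩
  · subst hteq; exact Or.inl ⟨Or.inr (Or.inl ⟨i, hi, rfl⟩), _, _, U2 hn hi ht⟩
  · subst hteq; exact Or.inl ⟨Or.inr (Or.inr ⟨i, j, hi, hj, hij, rfl⟩), _, _, U3 hn hi hj hij ht⟩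
  · subst hteq; exact Or.inr ⟨_, U4 hn hi hj hij ht⟩
  · subst hteq; exact Or.inr ⟨_, U5 hn hi hj hij ht⟩

lemma It_le_two (hn : 4 ≤ n) {t : Equiv.Perm (Fin n)} (ht : t ∉ As n) (ht1 : t ≠ 1) :
    (It n t).ncard ≤ 2 := by
  rcases Set.eq_empty_or_nonempty (It n t) with he | hne
  · rw [he]; simp
  rcases It_cases hn ht ht1 hne with ⟨-, c, d, hcd⟩ | ⟨c, hc⟩
  · exact subset_pair_ncard_le hcd
  · exact le_trans (subset_singleton_ncard_le hc) (by norm_num)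

lemma keybound (hn : 4 ≤ n) {t1 t3 : Equiv.Perm (Fin n)}
    (h1A : t1 ∉ As n) (h11 : t1 ≠ 1) (h3A : t3 ∉ As n) (h31 : t3 ≠ 1)
    (h2A : t1⁻¹ * t3 ∉ As n) (h21 : t1⁻¹ * t3 ≠ 1) :
    (It n t1).ncard + (It n t3 ∪ (fun y => t1 * y) '' It n (t1⁻¹ * t3)).ncard ≤ 5 := by
  set t2 := t1⁻¹ * t3 with ht2def
  set K := (fun y => t1 * y) '' It n t2 with hKdef
  have hKcard : K.ncard = (It n t2).ncard :=
    Set.ncard_image_of_injective _ (mul_right_injective t1)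
  have hb1 : (It n t1).ncard ≤ 2 := It_le_two hn h1A h11
  have hb3 : (It n t3).ncard ≤ 2 := It_le_two hn h3A h31
  have hb2 : K.ncard ≤ 2 := by rw [hKcard]; exact It_le_two hn h2A h21
  have hule := Set.ncard_union_le (It n t3) K
  rcases Set.eq_empty_or_nonempty (It n t1) with he1 | hne1
  · have h0 : (It n t1).ncard = 0 := by rw [he1]; simp
    omega
  rcases Set.eq_empty_or_nonempty (It n t3) with he3 | hne3
  · have h0 : (It n t3).ncard = 0 := by rw [he3]; simp
    omega
  rcases Set.eq_empty_or_nonempty (It n t2) with he2 | hne2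
  · have h0 : K.ncard = 0 := by rw [hKcard, he2]; simp
    omega
  rcases It_cases hn h1A h11 hne1 with ⟨hT1, -⟩ | ⟨c, hc⟩
  swap
  · have h1' : (It n t1).ncard ≤ 1 := subset_singleton_ncard_le hc
    omega
  rcases It_cases hn h3A h31 hne3 with ⟨hT3, c3, d3, hc3⟩ | ⟨c, hc⟩
  swap
  · have h1' : (It n t3).ncard ≤ 1 := subset_singleton_ncard_le hc
    omega
  rcases It_cases hn h2A h21 hne2 with ⟨hT2, c2, d2, hc2⟩ | ⟨c, hc⟩
  swap
  · have h1' : K.ncard ≤ 1 := by rw [hKcard]; exact subset_singleton_ncard_le hc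
    omega
  obtain ⟨x, hxA, hx1, hx3⟩ := shared hn hT1 hT3 hT2
  have hxIt3 : x ∈ It n t3 := ⟨hxA, hx3⟩
  have hxK : x ∈ K := by
    refine ⟨t1⁻¹ * x, ⟨hx1, ?_⟩, by group⟩
    have heq : t2⁻¹ * (t1⁻¹ * x) = t3⁻¹ * x := by rw [ht2def]; group
    rw [heq]; exact hx3
  have hKpair : K ⊆ {t1 * c2, t1 * d2} := by
    rintro z ⟨y, hy, rfl⟩
    rcases hc2 hy with rfl | hyd
    · exact Or.inl rfl
    · rw [Set.mem_singleton_iff] at hyd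
      subst hyd
      exact Or.inr rfl
  have hsub : It n t3 ∪ K ⊆ ({c3, d3} : Set _) ∪ (K \ {x}) := by
    rintro y (hy | hy)
    · exact Or.inl (hc3 hy)
    · by_cases hyx : y = x
      · exact Or.inl (hc3 (hyx ▸ hxIt3))
      · exact Or.inr ⟨hy, hyx⟩
  have hdiff : (K \ {x}).ncard ≤ 1 := diff_single hKpair hxK
  have hle1 := Set.ncard_le_ncard hsub (Set.toFinite _)
  have hle2 := Set.ncard_union_le ({c3, d3} : Set (Equiv.Perm (Fin n))) (K \ {x})
  have hle3 := ncard_pair_le c3 d3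
  omega

def Nb (n : ℕ) [NeZero n] (u : Equiv.Perm (Fin n)) : Set (Equiv.Perm (Fin n)) :=
  {x | u⁻¹ * x ∈ As n}

lemma Nb_image (u : Equiv.Perm (Fin n)) : Nb n u = (fun a => u * a) '' As n := by
  ext z
  constructor
  · intro hz
    exact ⟨u⁻¹ * z, hz, by group⟩
  · rintro ⟨a, ha, rfl⟩
    show u⁻¹ * (u * a) ∈ As n
    rwa [inv_mul_cancel_left]

lemma Nb_ncard (hn : 4 ≤ n) (u : Equiv.Perm (Fin n)) : (Nb n u).ncard = 2 * n - 3 := by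
  rw [Nb_image, Set.ncard_image_of_injective _ (mul_right_injective u), ncard_As hn]

lemma Nb_inter (u v : Equiv.Perm (Fin n)) :
    Nb n u ∩ Nb n v = (fun y => u * y) '' It n (u⁻¹ * v) := by
  ext z
  constructor
  · rintro ⟨hzu, hzv⟩
    refine ⟨u⁻¹ * z, ⟨hzu, ?_⟩, by group⟩
    have h : (u⁻¹ * v)⁻¹ * (u⁻¹ * z) = v⁻¹ * z := by group
    rw [h]; exact hzv
  · rintro ⟨y, ⟨hyA, hyt⟩, rfl⟩
    constructor
    · show u⁻¹ * (u * y) ∈ As n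
      rwa [inv_mul_cancel_left]
    · show v⁻¹ * (u * y) ∈ As n
      have h : v⁻¹ * (u * y) = (u⁻¹ * v)⁻¹ * y := by group
      rw [h]; exact hyt

end SS14

theorem stmt_14' (n : ℕ) [NeZero n] (hn : 4 ≤ n)
    (S : Set (Equiv.Perm (Fin n)))
    (hcard : S.ncard = 3) (hind : IsIndep (SplitStar n) S) :
    6 * n - 14 ≤ (nbhd (SplitStar n) S).ncard := by
  classical
  obtain ⟨u, v, w, huv, huw, hvw, rfl⟩ := Set.ncard_eq_three.mp hcard
  have hu : u ∈ ({u, v, w} : Set (Equiv.Perm (Fin n))) := by simp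
  have hv : v ∈ ({u, v, w} : Set (Equiv.Perm (Fin n))) := by simp
  have hw : w ∈ ({u, v, w} : Set (Equiv.Perm (Fin n))) := by simp
  have hdef : ∀ a ∈ ({u, v, w} : Set (Equiv.Perm (Fin n))),
      ∀ b ∈ ({u, v, w} : Set (Equiv.Perm (Fin n))), a⁻¹ * b ∉ SS14.As n := by
    intro a ha b hb h
    exact hind a ha b hb ((SS14.adj_iff hn).mpr h)
  have h1A : u⁻¹ * v ∉ SS14.As n := hdef u hu v hv
  have h3A : u⁻¹ * w ∉ SS14.As n := hdef u hu w hw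
  have h11 : u⁻¹ * v ≠ 1 := fun h => huv (inv_mul_eq_one.mp h)
  have h31 : u⁻¹ * w ≠ 1 := fun h => huw (inv_mul_eq_one.mp h)
  have h2eq : (u⁻¹ * v)⁻¹ * (u⁻¹ * w) = v⁻¹ * w := by group
  have h2A : (u⁻¹ * v)⁻¹ * (u⁻¹ * w) ∉ SS14.As n := by
    rw [h2eq]; exact hdef v hv w hw
  have h21 : (u⁻¹ * v)⁻¹ * (u⁻¹ * w) ≠ 1 := by
    rw [h2eq]; exact fun h => hvw (inv_mul_eq_one.mp h)
  have hnbhd : nbhd (SplitStar n) {u, v, w} = (SS14.Nb n u ∪ SS14.Nb n v) ∪ SS14.Nb n w := by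
    ext z
    constructor
    · rintro ⟨hzS, y, hy, hadj⟩
      have hz := (SS14.adj_iff hn).mp hadj
      simp only [Set.mem_insert_iff, Set.mem_singleton_iff] at hy
      rcases hy with rfl | rfl | rfl
      · exact Or.inl (Or.inl hz)
      · exact Or.inl (Or.inr hz)
      · exact Or.inr hz
    · intro hz
      have hex : ∃ y ∈ ({u, v, w} : Set (Equiv.Perm (Fin n))), (SplitStar n).Adj y z := by
        rcases hz with (hz | hz) | hz
        · exact ⟨u, hu, (SS14.adj_iff hn).mpr hz⟩
        · exact ⟨v, hv, (SS14.adj_iff hn).mpr hz⟩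
        · exact ⟨w, hw, (SS14.adj_iff hn).mpr hz⟩
      obtain ⟨y, hyS, hadj⟩ := hex
      refine ⟨fun hzS => hind y hyS z hzS hadj, y, hyS, hadj⟩
  rw [hnbhd]
  have e1 := Set.ncard_union_add_ncard_inter (SS14.Nb n u) (SS14.Nb n v)
    (Set.toFinite _) (Set.toFinite _)
  have e2 := Set.ncard_union_add_ncard_inter (SS14.Nb n u ∪ SS14.Nb n v) (SS14.Nb n w)
    (Set.toFinite _) (Set.toFinite _)
  have hNu := SS14.Nb_ncard hn u
  have hNv := SS14.Nb_ncard hn v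
  have hNw := SS14.Nb_ncard hn w
  have hI1 : (SS14.Nb n u ∩ SS14.Nb n v).ncard = (SS14.It n (u⁻¹ * v)).ncard := by
    rw [SS14.Nb_inter]
    exact Set.ncard_image_of_injective _ (mul_right_injective u)
  have hIuvw : ((SS14.Nb n u ∪ SS14.Nb n v) ∩ SS14.Nb n w).ncard =
      (SS14.It n (u⁻¹ * w) ∪
        (fun y => (u⁻¹ * v) * y) '' SS14.It n ((u⁻¹ * v)⁻¹ * (u⁻¹ * w))).ncard := by
    have hvw' : SS14.Nb n v ∩ SS14.Nb n w =
        (fun y => u * y) '' ((fun y => (u⁻¹ * v) * y) '' SS14.It n ((u⁻¹ * v)⁻¹ * (u⁻¹ * w))) := by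
      rw [SS14.Nb_inter, ← Set.image_comp]
      have hfun : ((fun y => u * y) ∘ (fun y => (u⁻¹ * v) * y)) = (fun y => v * y) := by
        funext y; show u * ((u⁻¹ * v) * y) = v * y; group
      rw [hfun, h2eq]
    rw [Set.union_inter_distrib_right, SS14.Nb_inter u w, hvw', ← Set.image_union,
      Set.ncard_image_of_injective _ (mul_right_injective u)]
  have kb := SS14.keybound hn h1A h11 h3A h31 h2A h21
  omega

theorem stmt_14 (n : ℕ) [NeZero n] (hn : 4 ≤ n)
    (S : Set (Equiv.Perm (Fin n)))
    (hcard : S.ncard = 3) (hind : IsIndep (SplitStar n) S) :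
    6 * n - 14 ≤ (nbhd (SplitStar n) S).ncard :=
  stmt_14' n hn S hcard hind
end
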